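/- arXiv:gr-qc/0005005 — 5 statements merged into one kernel-verified Lean document; each statement's English description precedes it below -/
import Mathlib

section
/- If ρ < ∞, then the liminf of A'(r) as r → ρ from the left is strictly greater than −∞, and the limit of A(r) as r → ρ from the left exists and is finite. -/
open Set Filter

set_option maxHeartbeats 1000000

lemma aux_deriv_contDiffAt {f : ℝ → ℝ} {x : ℝ} (h : ContDiffAt ℝ 2 f x) :
    ContDiffAt ℝ 1 (deriv f) x := by
  obtain ⟨u, hu, hcd⟩ := h.contDiffOn le_rfl (by simp)
  obtain ⟨t, htu, hto, hxt⟩ := mem_nhds_iff.mp hu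
  exact ((hcd.mono htu).deriv_of_isOpen hto (by norm_num)).contDiffAt (hto.mem_nhds hxt)

/-- If the maximal interval `[r_h, ρ)` of a noncompact solution of the static
spherically symmetric Einstein–SU(2) Yang–Mills equations with cosmological
constant `Λ` is finite (`ρ < ∞`), then the liminf of `A'(r)` as `r → ρ⁻` is
strictly greater than `-∞`, and the limit of `A(r)` as `r → ρ⁻` exists and is
finite. -/
theorem A_limit_exists_at_rho
    (Λ r_h ρ : ℝ) (hΛ : 0 < Λ) (hrh : Real.sqrt 2 < r_h)
    (hΛrh : 1 < Λ * r_h ^ 2) (hρ : r_h < ρ)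
    (A w : ℝ → ℝ)
    (hA : ∀ r : ℝ, r_h ≤ r → r < ρ → ContDiffAt ℝ 1 A r)
    (hw : ∀ r : ℝ, r_h ≤ r → r < ρ → ContDiffAt ℝ 2 w r)
    (hE1 : ∀ r ∈ Set.Ioo r_h ρ,
      r * deriv A r + 2 * A r * (deriv w r) ^ 2
        = 1 - A r - (1 - (w r) ^ 2) ^ 2 / r ^ 2 - Λ * r ^ 2)
    (hE2 : ∀ r ∈ Set.Ioo r_h ρ,
      r ^ 2 * A r * deriv (deriv w) r
        + r * (1 - A r - (1 - (w r) ^ 2) ^ 2 / r ^ 2 - Λ * r ^ 2) * deriv w r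
        + w r * (1 - (w r) ^ 2) = 0)
    (hArh : A r_h = 0)
    (hAneg : ∀ r ∈ Set.Ioo r_h ρ, A r < 0)
    (hwrh : (1 - (w r_h) ^ 2) ^ 2 < 1) :
    ⊥ < Filter.liminf (fun r : ℝ => ((deriv A r : ℝ) : EReal)) (nhdsWithin ρ (Set.Iio ρ))
    ∧ ∃ L : ℝ, Filter.Tendsto A (nhdsWithin ρ (Set.Iio ρ)) (nhds L) := by
  have hrh0 : 0 < r_h := lt_trans (Real.sqrt_pos.mpr two_pos) hrh
  have hρ0 : 0 < ρ := hrh0.trans hρ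
  have hw1 : ∀ r : ℝ, r_h ≤ r → r < ρ → ContDiffAt ℝ 1 (deriv w) r :=
    fun r h1 h2 => aux_deriv_contDiffAt (hw r h1 h2)
  set F : ℝ → ℝ :=
    fun x => ((-(A x)) * (deriv w x)^2 + (1 - (w x)^2)^2 / (2*x^2)) / x with hFdef
  -- key derivative estimate
  have key : ∀ r ∈ Set.Ioo r_h ρ, DifferentiableAt ℝ F r ∧ deriv F r ≤ 0 := by
    intro r hr
    obtain ⟨hr1, hr2⟩ := hr
    have hr0 : (0:ℝ) < r := hrh0.trans hr1
    have hAd : HasDerivAt A (deriv A r) r := ((hA r hr1.le hr2).differentiableAt (by norm_num)).hasDerivAt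
    have hwd : HasDerivAt w (deriv w r) r :=
      ((hw r hr1.le hr2).differentiableAt (by norm_num)).hasDerivAt
    have hw'd : HasDerivAt (deriv w) (deriv (deriv w) r) r :=
      ((hw1 r hr1.le hr2).differentiableAt (by norm_num)).hasDerivAt
    have h1 : HasDerivAt (fun x => (-(A x)) * (deriv w x)^2)
        (-(deriv A r) * (deriv w r)^2 + (-(A r)) * ((2:ℝ) * deriv w r ^ 1 * deriv (deriv w) r)) r :=
      hAd.neg.mul (hw'd.pow 2)
    have h2 : HasDerivAt (fun x => (1 - (w x)^2)^2)
        ((2:ℝ) * (1 - (w r)^2)^1 * (0 - (2:ℝ) * (w r)^1 * deriv w r)) r :=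
      ((hasDerivAt_const r (1:ℝ)).sub (hwd.pow 2)).pow 2
    have h3 : HasDerivAt (fun x : ℝ => 2*x^2) (2*((2:ℝ)*r^1)) r := (hasDerivAt_pow 2 r).const_mul 2
    have h4 := h2.div h3 (by positivity)
    have h5 : HasDerivAt F _ r := (h1.add h4).div (hasDerivAt_id' r) hr0.ne'
    refine ⟨h5.differentiableAt, ?_⟩
    rw [h5.deriv]
    simp only [Pi.add_apply, Pi.div_apply]
    have e1 := hE1 r ⟨hr1, hr2⟩
    have e2 := hE2 r ⟨hr1, hr2⟩
    have ha : A r < 0 := hAneg r ⟨hr1, hr2⟩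
    set a := A r
    set v := w r
    set p := deriv w r
    clear_value a v p
    have ha' : deriv A r = (1 - a - (1 - v^2)^2/r^2 - Λ*r^2 - 2*a*p^2)/r := by
      rw [eq_div_iff hr0.ne']
      linarith [e1]
    have hq : deriv (deriv w) r
        = (-(r*(1 - a - (1-v^2)^2/r^2 - Λ*r^2)*p) - v*(1-v^2))/(r^2*a) := by
      rw [eq_div_iff (by
        intro h
        rcases mul_eq_zero.mp h with h' | h'
        · exact (pow_ne_zero 2 hr0.ne') h'
        · exact ha.ne h')]
      linarith [e2]
    rw [ha', hq]
    have hkey : ((-((1 - a - (1 - v ^ 2) ^ 2 / r ^ 2 - Λ * r ^ 2 - 2 * a * p ^ 2) / r) * p ^ 2 +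
              -a * (2 * p ^ 1 *
                ((-(r * (1 - a - (1 - v ^ 2) ^ 2 / r ^ 2 - Λ * r ^ 2) * p) - v * (1 - v ^ 2)) /
                  (r ^ 2 * a))) +
            (2 * (1 - v ^ 2) ^ 1 * (0 - 2 * v ^ 1 * p) * (2 * r ^ 2) -
                (1 - v ^ 2) ^ 2 * (2 * (2 * r ^ 1))) / (2 * r ^ 2) ^ 2) * r -
          (-a * p ^ 2 + (1 - v ^ 2) ^ 2 / (2 * r ^ 2)) * 1) / r ^ 2
        = ((1 - (1-v^2)^2/r^2 - Λ*r^2)*p^2 + 2*a*p^4 - (3/2)*(1-v^2)^2/r^2)/r^2 := by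
      have hrne : r ≠ 0 := hr0.ne'
      have hane : a ≠ 0 := ha.ne
      field_simp
      ring
    rw [hkey]
    have hr2' : r_h^2 ≤ r^2 := by nlinarith
    have hP : 1 - (1-v^2)^2/r^2 - Λ*r^2 ≤ 0 := by
      have h0 : (0:ℝ) ≤ (1-v^2)^2/r^2 := by positivity
      nlinarith
    apply div_nonpos_of_nonpos_of_nonneg _ (sq_nonneg r)
    have hd : (0:ℝ) ≤ 3/2*(1-v^2)^2/r^2 := by positivity
    have h2' : 2*a*p^4 ≤ 0 := mul_nonpos_of_nonpos_of_nonneg (by linarith) (by positivity)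
    have h1' : (1 - (1-v^2)^2/r^2 - Λ*r^2)*p^2 ≤ 0 :=
      mul_nonpos_of_nonpos_of_nonneg hP (sq_nonneg p)
    linarith
  -- continuity of F on the closed-left interval
  have hFcont : ContinuousOn F (Set.Ico r_h ρ) := by
    intro x hx
    have hx0 : (0:ℝ) < x := lt_of_lt_of_le hrh0 hx.1
    have hAx := (hA x hx.1 hx.2).continuousAt
    have hwx := (hw x hx.1 hx.2).continuousAt
    have hw'x := (hw1 x hx.1 hx.2).continuousAt
    apply ContinuousAt.continuousWithinAt
    exact ((hAx.neg.mul (hw'x.pow 2)).add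
      (((continuousAt_const.sub (hwx.pow 2)).pow 2).div
        (continuousAt_const.mul (continuousAt_id.pow 2)) (by exact mul_ne_zero two_ne_zero (pow_ne_zero 2 hx0.ne')))).div
      continuousAt_id hx0.ne'
  have hFanti : AntitoneOn F (Set.Ico r_h ρ) := by
    apply antitoneOn_of_deriv_nonpos (convex_Ico _ _) hFcont
    · rw [interior_Ico]
      exact fun x hx => (key x hx).1.differentiableWithinAt
    · rw [interior_Ico]
      exact fun x hx => (key x hx).2
  have hFrh_nonneg : 0 ≤ F r_h := by
    rw [hFdef]
    simp only [hArh]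
    positivity
  obtain ⟨M, hMdef⟩ : ∃ x : ℝ, x = 2*ρ^2 * (ρ * F r_h) := ⟨_, rfl⟩
  have hM0 : 0 ≤ M := by rw [hMdef]; positivity
  have hB : ∀ r ∈ Set.Ioo r_h ρ, (1 - (w r)^2)^2 ≤ M := by
    intro r hr
    have hr0 : (0:ℝ) < r := hrh0.trans hr.1
    have hF1 : F r ≤ F r_h := hFanti ⟨le_rfl, hρ⟩ ⟨hr.1.le, hr.2⟩ hr.1.le
    have hAr : A r < 0 := hAneg r hr
    have hEr : (1 - (w r)^2)^2/(2*r^2) ≤ r * F r_h := by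
      have hstep : (1 - (w r)^2)^2/(2*r^2)
          ≤ (-(A r)) * (deriv w r)^2 + (1 - (w r)^2)^2/(2*r^2) := by
        nlinarith [sq_nonneg (deriv w r)]
      have heq : (-(A r)) * (deriv w r)^2 + (1 - (w r)^2)^2/(2*r^2) = r * F r := by
        rw [hFdef]
        field_simp
      calc (1 - (w r)^2)^2/(2*r^2) ≤ r * F r := by rw [← heq]; exact hstep
        _ ≤ r * F r_h := mul_le_mul_of_nonneg_left hF1 hr0.le
    have hr2 : r^2 ≤ ρ^2 := by nlinarith [hr.2]
    have : (1 - (w r)^2)^2 ≤ 2*r^2 * (r * F r_h) := by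
      calc (1 - (w r)^2)^2 = 2*r^2 * ((1 - (w r)^2)^2/(2*r^2)) := by field_simp
        _ ≤ 2*r^2 * (r * F r_h) := mul_le_mul_of_nonneg_left hEr (by positivity)
    refine le_trans this ?_
    rw [hMdef]
    have hrρ : r ≤ ρ := hr.2.le
    have hcube : r^2*r ≤ ρ^2*ρ := by nlinarith
    nlinarith [mul_le_mul_of_nonneg_right hcube hFrh_nonneg]
  obtain ⟨K, hKdef⟩ : ∃ x : ℝ, x = M/r_h^2 + Λ*ρ^2 := ⟨_, rfl⟩
  have hK0 : 0 < K := by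
    rw [hKdef]
    have : 0 ≤ M/r_h^2 := by positivity
    have : 0 < Λ*ρ^2 := by positivity
    linarith
  obtain ⟨C, hCdef⟩ : ∃ x : ℝ, x = K/r_h := ⟨_, rfl⟩
  have hC0 : 0 < C := by rw [hCdef]; positivity
  have hA'lb : ∀ r ∈ Set.Ioo r_h ρ, -C ≤ deriv A r := by
    intro r hr
    have hr0 : (0:ℝ) < r := hrh0.trans hr.1
    have e1 := hE1 r hr
    have hAr : A r < 0 := hAneg r hr
    have hdiv : (1 - (w r)^2)^2/r^2 ≤ M/r_h^2 :=
      div_le_div₀ hM0 (hB r hr) (pow_pos hrh0 2) (by nlinarith [hr.1, hrh0])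
    have hr2ρ : r^2 ≤ ρ^2 := by nlinarith [hr.2, hr0]
    have hΛr : Λ * r^2 ≤ Λ * ρ^2 := mul_le_mul_of_nonneg_left hr2ρ hΛ.le
    have hDA : -K ≤ r * deriv A r := by
      nlinarith [hKdef, mul_nonneg (mul_nonneg (by norm_num : (0:ℝ) ≤ 2) (neg_nonneg.mpr hAr.le))
        (sq_nonneg (deriv w r))]
    have hCr : K = C * r_h := by
      rw [hCdef]
      field_simp
    have h1 : r * (-C) ≤ r * deriv A r := by
      nlinarith [mul_pos hC0 (sub_pos.mpr hr.1)]
    exact le_of_mul_le_mul_left h1 hr0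
  constructor
  · -- liminf part
    have hIoo_mem : Set.Ioo r_h ρ ∈ nhdsWithin ρ (Set.Iio ρ) := by
      rw [← Set.Ioi_inter_Iio]
      exact Filter.inter_mem (mem_nhdsWithin_of_mem_nhds (Ioi_mem_nhds hρ)) self_mem_nhdsWithin
    have hev : ∀ᶠ r in nhdsWithin ρ (Set.Iio ρ),
        ((-C : ℝ) : EReal) ≤ ((deriv A r : ℝ) : EReal) := by
      filter_upwards [hIoo_mem] with r hr
      exact_mod_cast hA'lb r hr
    refine lt_of_lt_of_le (EReal.bot_lt_coe (-C)) ?_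
    rw [Filter.liminf_eq]
    exact le_sSup hev
  · -- limit part
    set g : ℝ → ℝ := fun x => A x + C * x with hgdef
    have hgd : ∀ x ∈ Set.Ioo r_h ρ, HasDerivAt g (deriv A x + C) x := by
      intro x hx
      have h1 : HasDerivAt A (deriv A x) x :=
        ((hA x hx.1.le hx.2).differentiableAt (by norm_num)).hasDerivAt
      have h2 : HasDerivAt (fun y : ℝ => C * y) C x := by
        simpa using (hasDerivAt_id' x).const_mul C
      exact h1.add h2
    have hgmono : MonotoneOn g (Set.Ioo r_h ρ) := by
      apply monotoneOn_of_deriv_nonneg (convex_Ioo _ _)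
      · exact fun x hx => ((hgd x hx).continuousAt).continuousWithinAt
      · rw [isOpen_Ioo.interior_eq]
        exact fun x hx => (hgd x hx).differentiableAt.differentiableWithinAt
      · rw [isOpen_Ioo.interior_eq]
        intro x hx
        rw [(hgd x hx).deriv]
        linarith [hA'lb x hx]
    have hbdd : BddAbove (g '' Set.Ioo r_h ρ) := by
      refine ⟨C * ρ, ?_⟩
      rintro _ ⟨x, hx, rfl⟩
      have hAx : A x < 0 := hAneg x hx
      have : C * x ≤ C * ρ := mul_le_mul_of_nonneg_left hx.2.le hC0.le
      simp only [hgdef]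
      linarith
    have hne : (Set.Ioo r_h ρ).Nonempty := Set.nonempty_Ioo.mpr hρ
    have hgt := MonotoneOn.tendsto_nhdsWithin_Ioo_left hne hgmono hbdd
    refine ⟨sSup (g '' Set.Ioo r_h ρ) - C * ρ, ?_⟩
    have hlin : Filter.Tendsto (fun x : ℝ => C * x) (nhdsWithin ρ (Set.Iio ρ)) (nhds (C * ρ)) :=
      ((continuous_const.mul continuous_id).tendsto ρ).mono_left nhdsWithin_le_nhds
    have hsub := hgt.sub hlin
    refine hsub.congr fun x => ?_
    simp only [hgdef]
    ring
end

section
/- If ρ < ∞ and A(r) → 0 as r → ρ from the left, then the limit of A(r)·w'(r)² as r → ρ from the left exists and is finite. -/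
open Set Filter Topology

private lemma aux_diff_deriv {w : ℝ → ℝ} {r : ℝ} (h : ContDiffAt ℝ 2 w r) :
    DifferentiableAt ℝ (deriv w) r := by
  obtain ⟨u, hu, hcd⟩ := h.contDiffOn (le_refl 2) (by simp)
  obtain ⟨v, hvu, hvo, hrv⟩ := mem_nhds_iff.mp hu
  have h2 : ContDiffOn ℝ 2 w v := hcd.mono hvu
  have h3 : ContDiffOn ℝ 1 (deriv w) v := h2.deriv_of_isOpen hvo (by norm_num)
  exact (h3.differentiableOn (by norm_num)).differentiableAt (hvo.mem_nhds hrv)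

private lemma aux_hasDerivAt (A w : ℝ → ℝ) (c C₁ r : ℝ) (hr : r ≠ 0)
    (hA : DifferentiableAt ℝ A r) (hw : DifferentiableAt ℝ w r)
    (hW : DifferentiableAt ℝ (deriv w) r) :
    HasDerivAt (fun s => A s * (deriv w s)^2 - c * (1 - (w s)^2)^2 / (2*s^2) + C₁ * s)
      (deriv A r * (deriv w r)^2 + 2 * A r * deriv w r * deriv (deriv w) r
        + 2*c * (w r) * (deriv w r) * (1 - (w r)^2) / r^2
        + c * (1 - (w r)^2)^2 / r^3 + C₁) r := by
  have hden : (2*r^2 : ℝ) ≠ 0 := by positivity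
  have hA' : HasDerivAt A (deriv A r) r := hA.hasDerivAt
  have hw1 : HasDerivAt w (deriv w r) r := hw.hasDerivAt
  have hW1 : HasDerivAt (deriv w) (deriv (deriv w) r) r := hW.hasDerivAt
  have H := ((hA'.mul (hW1.pow 2)).sub
      (((((hw1.pow 2).const_sub 1).pow 2).const_mul c).div
        ((hasDerivAt_pow 2 r).const_mul 2) hden)).add
      ((hasDerivAt_id r).const_mul C₁)
  refine H.congr_deriv ?_
  norm_num
  field_simp
  ring

private lemma aux_Q (Λ r a a' v W W' c C₁ : ℝ) (hr : r ≠ 0)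
    (hE1 : r * a' + 2 * a * W ^ 2 = 1 - a - (1 - v ^ 2) ^ 2 / r ^ 2 - Λ * r ^ 2)
    (hE2 : r ^ 2 * a * W' + r * (1 - a - (1 - v ^ 2) ^ 2 / r ^ 2 - Λ * r ^ 2) * W
        + v * (1 - v ^ 2) = 0) :
    a' * W^2 + 2 * a * W * W' + 2*c * v * W * (1 - v^2) / r^2 + c * (1 - v^2)^2 / r^3 + C₁
      = (-((r^2 - a*r^2 - (1-v^2)^2 - Λ*r^4) * W^2) - 2*a*W^4*r^2
          + 2*(c-1)*r*v*W*(1-v^2) + c*(1-v^2)^2 + C₁*r^3) / r^3 := by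
  have hE1c : r^3 * a' + 2*a*W^2*r^2 = r^2 - a*r^2 - (1-v^2)^2 - Λ*r^4 := by
    field_simp at hE1
    linear_combination hE1
  have hE2c : r^3*a*W' + (r^2 - a*r^2 - (1-v^2)^2 - Λ*r^4)*W + r*v*(1-v^2) = 0 := by
    field_simp at hE2
    apply mul_left_cancel₀ hr
    linear_combination r * hE2
  have ha' : a' = (r^2 - a*r^2 - (1-v^2)^2 - Λ*r^4 - 2*a*W^2*r^2)/r^3 := by
    rw [eq_div_iff (pow_ne_zero 3 hr)]
    linear_combination hE1c
  have haW' : a*W' = -((r^2 - a*r^2 - (1-v^2)^2 - Λ*r^4)*W + r*v*(1-v^2))/r^3 := by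
    rw [eq_div_iff (pow_ne_zero 3 hr)]
    linear_combination hE2c
  have h2 : 2*a*W*W' = 2*W*(a*W') := by ring
  rw [h2, haW', ha']
  field_simp
  ring

private lemma aux_sign (P a v W u r r₀ ρ δ B η : ℝ)
    (hu : u = (1-v^2)^2)
    (hP : P ≤ -(δ*r^2)) (ha : a ≤ 0)
    (hBl : -B ≤ v*(1-v^2)) (hBu : v*(1-v^2) ≤ B) (hB : 0 < B)
    (hδ : 0 < δ) (hr₀ : 0 < r₀) (hr₀r : r₀ ≤ r) (hrρ : r ≤ ρ) (hρ : 0 < ρ)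
    (hη : η = δ*r₀^2/(B*ρ)) :
    0 ≤ -(P * W^2) - 2*a*W^4*r^2 + 2*η*r*v*W*(1-v^2) + (1+η)*u + (δ/ρ)*r^3 := by
  have hr : 0 < r := lt_of_lt_of_le hr₀ hr₀r
  have hηpos : 0 < η := by rw [hη]; positivity
  have hηB : η*B*ρ = δ*r₀^2 := by rw [hη]; field_simp
  have hcross : -(B*(W^2+1)) ≤ 2*(v*(1-v^2))*W := by
    nlinarith [mul_nonneg (sub_nonneg.2 hBu) (sq_nonneg (W-1)),
      mul_nonneg (by linarith : (0:ℝ) ≤ B + v*(1-v^2)) (sq_nonneg (W+1))]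
  have hA1 : 0 ≤ (-P - δ*r^2)*W^2 := mul_nonneg (by linarith) (sq_nonneg W)
  have hA2 : 0 ≤ -(2*a)*(W^4*r^2) := mul_nonneg (by linarith) (by positivity)
  have hA3 : η*r*(-(B*(W^2+1))) ≤ η*r*(2*(v*(1-v^2))*W) :=
    mul_le_mul_of_nonneg_left hcross (by positivity)
  have hA4 : η*r*(B*(W^2+1)) ≤ δ*r^2*W^2 + (δ/ρ)*r^3 := by
    have e1 : r₀^2*r ≤ ρ*r^2 := by
      nlinarith [mul_nonneg hr.le (sub_nonneg.2 (mul_le_mul (hr₀r.trans hrρ) hr₀r hr₀.le hρ.le : r₀*r₀ ≤ ρ*r))]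
    have e2 : r₀^2*r ≤ r^3 := by
      nlinarith [mul_nonneg (mul_nonneg hr.le (sub_nonneg.2 hr₀r)) (by linarith : (0:ℝ) ≤ r+r₀)]
    have hρr3 : ρ*((δ/ρ)*r^3) = δ*r^3 := by field_simp
    have h3 : ρ*(η*r*(B*(W^2+1))) = δ*r₀^2*r*(W^2+1) := by linear_combination (r*(W^2+1))*hηB
    have f1 : δ*(r₀^2*r)*W^2 ≤ δ*(ρ*r^2)*W^2 :=
      mul_le_mul_of_nonneg_right (mul_le_mul_of_nonneg_left e1 hδ.le) (sq_nonneg W)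
    have f2 : δ*(r₀^2*r) ≤ δ*r^3 := mul_le_mul_of_nonneg_left e2 hδ.le
    have h2 : ρ*(η*r*(B*(W^2+1))) ≤ ρ*(δ*r^2*W^2 + (δ/ρ)*r^3) := by
      rw [h3]
      nlinarith [f1, f2, hρr3]
    exact le_of_mul_le_mul_left h2 hρ
  have hu0 : 0 ≤ (1+η)*u := by rw [hu]; positivity
  linarith [hA1, hA2, hA3, hA4, hu0]

set_option maxHeartbeats 1000000 in
/-- If the maximal interval `[r_h, ρ)` of a noncompact solution of the static
spherically symmetric Einstein–SU(2) Yang–Mills equations with cosmological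
constant `Λ` is finite (`ρ < ∞`) and `A(r) → 0` as `r → ρ⁻`, then
`A(r)·w'(r)²` tends to a finite limit as `r → ρ⁻`. -/
theorem Awprime_sq_limit_exists
    (Λ r_h ρ : ℝ) (hΛ : 0 < Λ) (hrh : Real.sqrt 2 < r_h)
    (hΛrh : 1 < Λ * r_h ^ 2) (hρ : r_h < ρ)
    (A w : ℝ → ℝ)
    (hA : ∀ r : ℝ, r_h ≤ r → r < ρ → ContDiffAt ℝ 1 A r)
    (hw : ∀ r : ℝ, r_h ≤ r → r < ρ → ContDiffAt ℝ 2 w r)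
    (hE1 : ∀ r ∈ Set.Ioo r_h ρ,
      r * deriv A r + 2 * A r * (deriv w r) ^ 2
        = 1 - A r - (1 - (w r) ^ 2) ^ 2 / r ^ 2 - Λ * r ^ 2)
    (hE2 : ∀ r ∈ Set.Ioo r_h ρ,
      r ^ 2 * A r * deriv (deriv w) r
        + r * (1 - A r - (1 - (w r) ^ 2) ^ 2 / r ^ 2 - Λ * r ^ 2) * deriv w r
        + w r * (1 - (w r) ^ 2) = 0)
    (hArh : A r_h = 0)
    (hAneg : ∀ r ∈ Set.Ioo r_h ρ, A r < 0)
    (hwrh : (1 - (w r_h) ^ 2) ^ 2 < 1)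
    (hA0 : Filter.Tendsto A (nhdsWithin ρ (Set.Iio ρ)) (nhds 0)) :
    ∃ L : ℝ, Filter.Tendsto (fun r => A r * (deriv w r) ^ 2)
      (nhdsWithin ρ (Set.Iio ρ)) (nhds L) := by
  have hrh0 : (0:ℝ) < r_h := lt_trans (by positivity) hrh
  have hρ0 : (0:ℝ) < ρ := hrh0.trans hρ
  set δ : ℝ := (Λ * r_h ^ 2 - 1) / 2 with hδdef
  have hδ : 0 < δ := by rw [hδdef]; linarith
  -- choose r₀
  have hev : {r : ℝ | |A r| < δ} ∈ nhdsWithin ρ (Set.Iio ρ) := by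
    have h := Metric.tendsto_nhds.mp hA0 δ hδ
    simp only [Real.dist_eq, sub_zero] at h
    exact h
  obtain ⟨l, hl, hsub⟩ := mem_nhdsLT_iff_exists_Ioo_subset.mp hev
  set r₀ : ℝ := max l r_h with hr₀def
  have hr₀rh : r_h ≤ r₀ := le_max_right _ _
  have hr₀ρ : r₀ < ρ := max_lt hl hρ
  have hr₀0 : 0 < r₀ := lt_of_lt_of_le hrh0 hr₀rh
  have hmemIoo : ∀ r ∈ Set.Ioo r₀ ρ, r ∈ Set.Ioo r_h ρ ∧ |A r| < δ := by
    intro r hr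
    exact ⟨⟨lt_of_le_of_lt hr₀rh hr.1, hr.2⟩,
      hsub ⟨lt_of_le_of_lt (le_max_left _ _) hr.1, hr.2⟩⟩
  -- differentiability
  have hdiffs : ∀ r : ℝ, r_h ≤ r → r < ρ →
      DifferentiableAt ℝ A r ∧ DifferentiableAt ℝ w r ∧ DifferentiableAt ℝ (deriv w) r :=
    fun r h1 h2 => ⟨(hA r h1 h2).differentiableAt (by norm_num),
      (hw r h1 h2).differentiableAt (by norm_num), aux_diff_deriv (hw r h1 h2)⟩
  have hHD : ∀ (c C₁ : ℝ) (r : ℝ), r_h ≤ r → r < ρ →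
      HasDerivAt (fun s => A s * (deriv w s)^2 - c * (1 - (w s)^2)^2 / (2*s^2) + C₁ * s)
        (deriv A r * (deriv w r)^2 + 2 * A r * deriv w r * deriv (deriv w) r
          + 2*c * (w r) * (deriv w r) * (1 - (w r)^2) / r^2
          + c * (1 - (w r)^2)^2 / r^3 + C₁) r := by
    intro c C₁ r h1 h2
    obtain ⟨d1, d2, d3⟩ := hdiffs r h1 h2
    exact aux_hasDerivAt A w c C₁ r (hrh0.trans_le h1).ne' d1 d2 d3
  -- generic monotonicity criterion
  have hmono : ∀ (c C₁ : ℝ),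
      (∀ r ∈ Set.Ioo r₀ ρ, 0 ≤ -((r^2 - A r*r^2 - (1-(w r)^2)^2 - Λ*r^4) * (deriv w r)^2)
          - 2*(A r)*(deriv w r)^4*r^2 + 2*(c-1)*r*(w r)*(deriv w r)*(1-(w r)^2)
          + c*(1-(w r)^2)^2 + C₁*r^3) →
      MonotoneOn (fun s => A s * (deriv w s)^2 - c * (1 - (w s)^2)^2 / (2*s^2) + C₁ * s)
        (Set.Ico r₀ ρ) := by
    intro c C₁ hQ
    apply monotoneOn_of_deriv_nonneg (convex_Ico r₀ ρ)
    · intro x hx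
      exact ((hHD c C₁ x (hr₀rh.trans hx.1) hx.2).differentiableAt).continuousAt.continuousWithinAt
    · rw [interior_Ico]
      intro x hx
      exact ((hHD c C₁ x (hr₀rh.trans hx.1.le) hx.2).differentiableAt).differentiableWithinAt
    · rw [interior_Ico]
      intro x hx
      have hx' := (hmemIoo x hx).1
      have hx0 : (x:ℝ) ≠ 0 := (hrh0.trans hx'.1).ne'
      rw [(hHD c C₁ x (hr₀rh.trans hx.1.le) hx.2).deriv,
        aux_Q Λ x (A x) (deriv A x) (w x) (deriv w x) (deriv (deriv w) x) c C₁ hx0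
          (hE1 x hx') (hE2 x hx')]
      exact div_nonneg (hQ x hx) (pow_nonneg (hrh0.trans hx'.1).le 3)
  -- the bound P ≤ -δ r²
  have hP : ∀ r ∈ Set.Ioo r₀ ρ,
      (r^2 - A r*r^2 - (1-(w r)^2)^2 - Λ*r^4) ≤ -(δ*r^2) := by
    intro r hr
    obtain ⟨hrI, habs⟩ := hmemIoo r hr
    have h1 : -δ < A r := (abs_lt.mp habs).1
    have h3 : 1 - A r - Λ*r^2 ≤ -δ := by
      have h2 : Λ*r_h^2 ≤ Λ*r^2 :=
        mul_le_mul_of_nonneg_left (pow_le_pow_left₀ hrh0.le hrI.1.le 2) hΛ.le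
      rw [hδdef] at *
      linarith
    have h4 := mul_le_mul_of_nonneg_left h3 (sq_nonneg r)
    nlinarith [sq_nonneg (1 - (w r)^2)]
  -- case c = 1
  have hQ1 : ∀ r ∈ Set.Ioo r₀ ρ, 0 ≤ -((r^2 - A r*r^2 - (1-(w r)^2)^2 - Λ*r^4) * (deriv w r)^2)
      - 2*(A r)*(deriv w r)^4*r^2 + 2*((1:ℝ)-1)*r*(w r)*(deriv w r)*(1-(w r)^2)
      + 1*(1-(w r)^2)^2 + 0*r^3 := by
    intro r hr
    obtain ⟨hrI, _⟩ := hmemIoo r hr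
    have ha := hAneg r hrI
    have hPn : 0 ≤ -(r^2 - A r*r^2 - (1-(w r)^2)^2 - Λ*r^4) := by
      have := hP r hr
      nlinarith [mul_pos hδ (mul_pos (hrh0.trans hrI.1) (hrh0.trans hrI.1))]
    have t1 : 0 ≤ -(r^2 - A r*r^2 - (1-(w r)^2)^2 - Λ*r^4)*(deriv w r)^2 :=
      mul_nonneg hPn (sq_nonneg _)
    have t2 : 0 ≤ -(2*A r)*((deriv w r)^4*r^2) := mul_nonneg (by linarith) (by positivity)
    nlinarith [sq_nonneg (1-(w r)^2), t1, t2]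
  have hg₁mono := hmono 1 0 hQ1
  -- A ≤ 0 on [r₀, ρ)
  have hAle : ∀ r, r₀ ≤ r → r < ρ → A r ≤ 0 := by
    intro r h1 h2
    rcases eq_or_lt_of_le (hr₀rh.trans h1) with h|h
    · rw [← h]; exact le_of_eq hArh
    · exact (hAneg r ⟨h, h2⟩).le
  have hG1le : ∀ r, r₀ ≤ r → r < ρ →
      A r * (deriv w r)^2 - 1*(1-(w r)^2)^2/(2*r^2) + 0*r ≤ 0 := by
    intro r h1 h2
    have ha1 : A r * (deriv w r)^2 ≤ 0 :=
      mul_nonpos_of_nonpos_of_nonneg (hAle r h1 h2) (sq_nonneg _)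
    have ha2 : 0 ≤ 1*(1-(w r)^2)^2/(2*r^2) := by positivity
    linarith
  -- bound on (1-w²)²
  set M₀ : ℝ := -(A r₀ * (deriv w r₀)^2 - 1*(1-(w r₀)^2)^2/(2*r₀^2) + 0*r₀) with hM₀def
  have hM₀ : 0 ≤ M₀ := by
    rw [hM₀def]
    have := hG1le r₀ le_rfl hr₀ρ
    linarith
  have hu_bd : ∀ r ∈ Set.Ico r₀ ρ, (1-(w r)^2)^2 ≤ 2*ρ^2*M₀ := by
    intro r hr
    have h := hg₁mono (left_mem_Ico.2 hr₀ρ) hr hr.1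
    simp only at h
    have hr0 : 0 < r := lt_of_lt_of_le hr₀0 hr.1
    have ha1 : A r * (deriv w r)^2 ≤ 0 :=
      mul_nonpos_of_nonpos_of_nonneg (hAle r hr.1 hr.2) (sq_nonneg _)
    have h5 : (1-(w r)^2)^2/(2*r^2) ≤ M₀ := by
      rw [hM₀def]; ring_nf at h ⊢; linarith [h, ha1]
    rw [div_le_iff₀ (by positivity : (0:ℝ) < 2*r^2)] at h5
    have h6 : M₀*(2*r^2) ≤ 2*ρ^2*M₀ := by
      nlinarith [mul_le_mul_of_nonneg_right (mul_self_le_mul_self hr0.le hr.2.le) hM₀]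
    linarith
  set s : ℝ := Real.sqrt (2*ρ^2*M₀) with hsdef
  have hs0 : 0 ≤ s := Real.sqrt_nonneg _
  have hs2 : s^2 = 2*ρ^2*M₀ := Real.sq_sqrt (by positivity)
  set B : ℝ := (1+s)*s + 1 with hBdef
  have hB : 0 < B := by rw [hBdef]; nlinarith
  have hBbd : ∀ r ∈ Set.Ico r₀ ρ,
      -B ≤ (w r)*(1-(w r)^2) ∧ (w r)*(1-(w r)^2) ≤ B := by
    intro r hr
    have h7 := hu_bd r hr
    have h9 : (1-(w r)^2)^2 ≤ s^2 := by linarith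
    have hv2 : (w r)^2 ≤ 1 + s := by nlinarith [sq_nonneg (1-(w r)^2 - s), sq_nonneg (1-(w r)^2 + s)]
    have key1 : ((w r)*(1-(w r)^2))^2 ≤ (1+s)*s^2 := by
      have := mul_le_mul hv2 h9 (sq_nonneg _) (by linarith : (0:ℝ) ≤ 1+s)
      nlinarith [this]
    have key2 : ((w r)*(1-(w r)^2))^2 ≤ B^2 := by
      rw [hBdef]
      nlinarith [key1, mul_nonneg (mul_nonneg (by linarith : (0:ℝ) ≤ 1+s) hs0) (mul_nonneg hs0 hs0),
        mul_nonneg (by linarith : (0:ℝ) ≤ 1+s) hs0, sq_nonneg s]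
    constructor
    · nlinarith [sq_nonneg ((w r)*(1-(w r)^2) + B), key2, hB]
    · nlinarith [sq_nonneg ((w r)*(1-(w r)^2) - B), key2, hB]
  set η : ℝ := δ*r₀^2/(B*ρ) with hηdef
  have hηpos : 0 < η := by rw [hηdef]; positivity
  -- case c = 1 + η
  have hQ2 : ∀ r ∈ Set.Ioo r₀ ρ, 0 ≤ -((r^2 - A r*r^2 - (1-(w r)^2)^2 - Λ*r^4) * (deriv w r)^2)
      - 2*(A r)*(deriv w r)^4*r^2 + 2*((1+η)-1)*r*(w r)*(deriv w r)*(1-(w r)^2)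
      + (1+η)*(1-(w r)^2)^2 + (δ/ρ)*r^3 := by
    intro r hr
    obtain ⟨hrI, _⟩ := hmemIoo r hr
    obtain ⟨hb1, hb2⟩ := hBbd r ⟨hr.1.le, hr.2⟩
    have := aux_sign (r^2 - A r*r^2 - (1-(w r)^2)^2 - Λ*r^4) (A r) (w r) (deriv w r)
      ((1-(w r)^2)^2) r r₀ ρ δ B η rfl (hP r hr) (hAneg r hrI).le hb1 hb2 hB hδ hr₀0
      hr.1.le hr.2.le hρ0 hηdef
    linarith [this]
  have hg₂mono := hmono (1+η) (δ/ρ) hQ2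
  -- limits
  have hne : (Set.Ioo r₀ ρ).Nonempty := nonempty_Ioo.2 hr₀ρ
  have hbdd1 : BddAbove ((fun s => A s * (deriv w s)^2 - 1*(1-(w s)^2)^2/(2*s^2) + 0*s) ''
      Set.Ioo r₀ ρ) := by
    refine ⟨0, ?_⟩
    rintro x ⟨t, ht, rfl⟩
    exact hG1le t ht.1.le ht.2
  have hbdd2 : BddAbove ((fun s => A s * (deriv w s)^2 - (1+η)*(1-(w s)^2)^2/(2*s^2) + (δ/ρ)*s) ''
      Set.Ioo r₀ ρ) := by
    refine ⟨δ, ?_⟩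
    rintro x ⟨t, ht, rfl⟩
    have ha1 : A t * (deriv w t)^2 ≤ 0 :=
      mul_nonpos_of_nonpos_of_nonneg (hAle t ht.1.le ht.2) (sq_nonneg _)
    have ha2 : 0 ≤ (1+η)*(1-(w t)^2)^2/(2*t^2) := by positivity
    have ha3 : (δ/ρ)*t ≤ (δ/ρ)*ρ := by
      apply mul_le_mul_of_nonneg_left ht.2.le (by positivity)
    have ha4 : (δ/ρ)*ρ = δ := div_mul_cancel₀ _ hρ0.ne'
    simp only
    linarith
  have ht1 := (hg₁mono.mono Set.Ioo_subset_Ico_self).tendsto_nhdsWithin_Ioo_left hne hbdd1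
  have ht2 := (hg₂mono.mono Set.Ioo_subset_Ico_self).tendsto_nhdsWithin_Ioo_left hne hbdd2
  set L₁ := sSup ((fun s => A s * (deriv w s)^2 - 1*(1-(w s)^2)^2/(2*s^2) + 0*s) '' Set.Ioo r₀ ρ)
  set L₂ := sSup ((fun s => A s * (deriv w s)^2 - (1+η)*(1-(w s)^2)^2/(2*s^2) + (δ/ρ)*s) ''
    Set.Ioo r₀ ρ)
  refine ⟨L₁ + (L₁ - L₂ + δ)/η, ?_⟩
  have hfun : ∀ t : ℝ, A t * (deriv w t)^2 =
      (A t * (deriv w t)^2 - 1*(1-(w t)^2)^2/(2*t^2) + 0*t)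
      + ((A t * (deriv w t)^2 - 1*(1-(w t)^2)^2/(2*t^2) + 0*t)
         - (A t * (deriv w t)^2 - (1+η)*(1-(w t)^2)^2/(2*t^2) + (δ/ρ)*t) + (δ/ρ)*t)/η := by
    intro t
    have h1 : (A t * (deriv w t)^2 - 1*(1-(w t)^2)^2/(2*t^2) + 0*t)
         - (A t * (deriv w t)^2 - (1+η)*(1-(w t)^2)^2/(2*t^2) + (δ/ρ)*t) + (δ/ρ)*t
        = η * ((1-(w t)^2)^2/(2*t^2)) := by ring
    rw [h1, mul_div_cancel_left₀ _ hηpos.ne']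
    ring
  have hgoalfun : (fun r => A r * (deriv w r)^2) =
      (fun t => (A t * (deriv w t)^2 - 1*(1-(w t)^2)^2/(2*t^2) + 0*t)
      + ((A t * (deriv w t)^2 - 1*(1-(w t)^2)^2/(2*t^2) + 0*t)
         - (A t * (deriv w t)^2 - (1+η)*(1-(w t)^2)^2/(2*t^2) + (δ/ρ)*t) + (δ/ρ)*t)/η) :=
    funext hfun
  rw [hgoalfun]
  have htlin : Tendsto (fun t : ℝ => (δ/ρ)*t) (nhdsWithin ρ (Set.Iio ρ)) (𝓝 δ) := by
    have h := (tendsto_id.mono_right nhdsWithin_le_nhds :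
      Tendsto id (nhdsWithin ρ (Set.Iio ρ)) (𝓝 ρ)).const_mul (δ/ρ)
    rwa [div_mul_cancel₀ _ hρ0.ne'] at h
  exact ht1.add (((ht1.sub ht2).add htlin).div_const η)
end

section
/- It is impossible that ρ < ∞ and A(r) → 0 as r → ρ from the left; that is, if ρ < ∞ then A(r) does not tend to 0 as r → ρ⁻. -/
namespace EYMaux

/-- If `f` has nonpositive derivative on an open interval and is differentiable
on the closed interval, it decreases across it. -/
lemma antitone_aux {f : ℝ → ℝ} {s t : ℝ} (hst : s ≤ t)
    (hdiff : ∀ x ∈ Set.Icc s t, DifferentiableAt ℝ f x)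
    (hd : ∀ x ∈ Set.Ioo s t, deriv f x ≤ 0) : f t ≤ f s := by
  rcases eq_or_lt_of_le hst with rfl | hlt
  · exact le_rfl
  · have h := antitoneOn_of_deriv_nonpos (convex_Icc s t)
      (fun x hx => (hdiff x hx).continuousAt.continuousWithinAt)
      (by
        rw [interior_Icc]
        exact fun x hx => (hdiff x (Set.Ioo_subset_Icc_self hx)).differentiableWithinAt)
      (by rw [interior_Icc]; exact hd)
    exact h (Set.left_mem_Icc.2 hst) (Set.right_mem_Icc.2 hst) hst

lemma strict_anti_aux {f : ℝ → ℝ} {s t : ℝ} (hst : s < t)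
    (hcont : ∀ x ∈ Set.Icc s t, ContinuousAt f x)
    (hd : ∀ x ∈ Set.Ioo s t, deriv f x < 0) : f t < f s := by
  have h := strictAntiOn_of_deriv_neg (convex_Icc s t)
    (fun x hx => (hcont x hx).continuousWithinAt)
    (by rw [interior_Icc]; exact hd)
  exact h (Set.left_mem_Icc.2 hst.le) (Set.right_mem_Icc.2 hst.le) hst

end EYMaux

set_option maxHeartbeats 1000000 in
/-- It is impossible that the maximal interval `[r_h, ρ)` of a noncompact
solution of the static spherically symmetric Einstein–SU(2) Yang–Mills
equations with cosmological constant `Λ` is finite while `A(r) → 0` as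
`r → ρ⁻`: if `ρ < ∞` then `A` does not tend to `0` at `ρ⁻`. -/
theorem A_not_tendsto_zero
    (Λ r_h ρ : ℝ) (hΛ : 0 < Λ) (hrh : Real.sqrt 2 < r_h)
    (hΛrh : 1 < Λ * r_h ^ 2) (hρ : r_h < ρ)
    (A w : ℝ → ℝ)
    (hA : ∀ r : ℝ, r_h ≤ r → r < ρ → ContDiffAt ℝ 1 A r)
    (hw : ∀ r : ℝ, r_h ≤ r → r < ρ → ContDiffAt ℝ 2 w r)
    (hE1 : ∀ r ∈ Set.Ioo r_h ρ,
      r * deriv A r + 2 * A r * (deriv w r) ^ 2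
        = 1 - A r - (1 - (w r) ^ 2) ^ 2 / r ^ 2 - Λ * r ^ 2)
    (hE2 : ∀ r ∈ Set.Ioo r_h ρ,
      r ^ 2 * A r * deriv (deriv w) r
        + r * (1 - A r - (1 - (w r) ^ 2) ^ 2 / r ^ 2 - Λ * r ^ 2) * deriv w r
        + w r * (1 - (w r) ^ 2) = 0)
    (hArh : A r_h = 0)
    (hAneg : ∀ r ∈ Set.Ioo r_h ρ, A r < 0)
    (hwrh : (1 - (w r_h) ^ 2) ^ 2 < 1) :
    ¬ Filter.Tendsto A (nhdsWithin ρ (Set.Iio ρ)) (nhds 0) := by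
  intro T
  have h20 : (0:ℝ) < Real.sqrt 2 := Real.sqrt_pos.mpr (by norm_num)
  have hrh0 : 0 < r_h := h20.trans hrh
  have hρ0 : 0 < ρ := hrh0.trans hρ
  obtain ⟨c, hcdef⟩ : ∃ c : ℝ, c = Λ * r_h ^ 2 - 1 := ⟨_, rfl⟩
  have hc : 0 < c := by rw [hcdef]; linarith
  obtain ⟨β, hβdef⟩ : ∃ β : ℝ, β = c/(2*ρ) := ⟨_, rfl⟩
  have hβ0 : 0 < β := by rw [hβdef]; positivity
  have hβc : β*(2*ρ) = c := by rw [hβdef]; field_simp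
  -- existence of derivatives
  have hder : ∀ r ∈ Set.Ioo r_h ρ, HasDerivAt A (deriv A r) r ∧ HasDerivAt w (deriv w r) r ∧
      HasDerivAt (deriv w) (deriv (deriv w) r) r := by
    intro r hr
    have h1 : DifferentiableAt ℝ A r := (hA r hr.1.le hr.2).differentiableAt (by norm_num)
    have h2 : DifferentiableAt ℝ w r := (hw r hr.1.le hr.2).differentiableAt (by norm_num)
    obtain ⟨s, hs, hcd⟩ := (hw r hr.1.le hr.2).contDiffOn le_rfl (by norm_num)
    have hio : r ∈ interior s := mem_interior_iff_mem_nhds.2 hs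
    have hcd' : ContDiffOn ℝ 1 (deriv w) (interior s) :=
      (hcd.mono interior_subset).deriv_of_isOpen isOpen_interior (by norm_num)
    have h3 : DifferentiableAt ℝ (deriv w) r :=
      (hcd'.differentiableOn (by norm_num)).differentiableAt (isOpen_interior.mem_nhds hio)
    exact ⟨h1.hasDerivAt, h2.hasDerivAt, h3.hasDerivAt⟩
  -- derivative of q := -A w'^2
  have hqD : ∀ r ∈ Set.Ioo r_h ρ, HasDerivAt (fun x => -(A x) * (deriv w x)^2)
      (((deriv w r)^2 * (((1 - A r - Λ*r^2)*r^2 - (1 - (w r)^2)^2) + 2*A r*(deriv w r)^2*r^2)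
         + 2*(w r)*(deriv w r)*(1 - (w r)^2)*r)/r^3) r := by
    intro r hr
    obtain ⟨hAd, hwd, hw2d⟩ := hder r hr
    have hr0 : 0 < r := hrh0.trans hr.1
    have hrne : r ≠ 0 := ne_of_gt hr0
    have hr3 : (r:ℝ)^3 ≠ 0 := by positivity
    have e1 := hE1 r hr
    have e2 := hE2 r hr
    have e1c : (r * deriv A r + 2 * A r * (deriv w r) ^ 2) * r^2
        = ((1 - A r - Λ*r^2)*r^2 - (1 - (w r)^2)^2) := by
      field_simp at e1; linear_combination e1
    have e2c : r^3 * A r * deriv (deriv w) r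
        + (deriv w r) * ((1 - A r - Λ*r^2)*r^2 - (1 - (w r)^2)^2)
        + r * (w r) * (1 - (w r)^2) = 0 := by
      have hPr : (1 - (w r)^2)^2/r^2 * r^2 = (1 - (w r)^2)^2 :=
        div_mul_cancel₀ _ (pow_ne_zero 2 hrne)
      linear_combination r * e2 + deriv w r * hPr
    have raw : HasDerivAt (fun x => -(A x) * (deriv w x)^2)
        (-(deriv A r) * (deriv w r)^2
          + -(A r) * ((2:ℕ) * (deriv w r)^(2-1) * deriv (deriv w) r)) r :=
      hAd.neg.mul (hw2d.pow 2)
    convert raw using 1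
    rw [div_eq_iff hr3]
    push_cast
    linear_combination ((deriv w r)^2) * e1c + 2*(deriv w r) * e2c
  -- derivative of p := (1-w^2)^2/(2 x^2)
  have hpD : ∀ r ∈ Set.Ioo r_h ρ, HasDerivAt (fun x => (1 - (w x)^2)^2/(2*x^2))
      ((-2*(w r)*(deriv w r)*(1 - (w r)^2)*r - (1 - (w r)^2)^2)/r^3) r := by
    intro r hr
    obtain ⟨hAd, hwd, hw2d⟩ := hder r hr
    have hr0 : 0 < r := hrh0.trans hr.1
    have hr3 : (r:ℝ)^3 ≠ 0 := by positivity
    have hn : HasDerivAt (fun x => (1 - (w x)^2)^2)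
        (2 * (1 - (w r)^2)^(2-1) * (-((2:ℕ) * (w r)^(2-1) * deriv w r))) r :=
      ((hwd.pow 2).const_sub 1).pow 2
    have hdd : HasDerivAt (fun x => 2*x^2) (2*((2:ℕ)*r^(2-1))) r :=
      (hasDerivAt_pow 2 r).const_mul 2
    have hdne : 2*r^2 ≠ 0 := by positivity
    have raw := hn.div hdd hdne
    refine raw.congr_deriv (Eq.symm ?_)
    rw [div_eq_div_iff hr3 (by positivity)]
    push_cast
    ring
  -- derivative of H := q + p
  have hHD : ∀ r ∈ Set.Ioo r_h ρ,
      HasDerivAt (fun x => -(A x) * (deriv w x)^2 + (1 - (w x)^2)^2/(2*x^2))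
      (((deriv w r)^2 * (((1 - A r - Λ*r^2)*r^2 - (1 - (w r)^2)^2) + 2*A r*(deriv w r)^2*r^2)
         - (1 - (w r)^2)^2)/r^3) r := by
    intro r hr
    have := (hqD r hr).add (hpD r hr)
    refine this.congr_deriv (Eq.symm ?_)
    ring
  -- pointwise sign facts
  have hq0 : ∀ r ∈ Set.Ioo r_h ρ, 0 ≤ -(A r) * (deriv w r)^2 := by
    intro r hr
    have := hAneg r hr
    have : 0 ≤ -(A r) := by linarith
    positivity
  have hH0 : ∀ r ∈ Set.Ioo r_h ρ, 0 ≤ -(A r) * (deriv w r)^2 + (1 - (w r)^2)^2/(2*r^2) := by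
    intro r hr
    have h1 := hq0 r hr
    have hr0 : 0 < r := hrh0.trans hr.1
    have h2 : 0 ≤ (1 - (w r)^2)^2/(2*r^2) := by positivity
    linarith
  -- the polynomial Φ·r² bound
  have hP : ∀ r ∈ Set.Ioo r_h ρ,
      (1 - A r - Λ*r^2)*r^2 - (1 - (w r)^2)^2 ≤ (-c - A r)*r^2 := by
    intro r hr
    have hrr : r_h^2 ≤ r^2 := pow_le_pow_left₀ hrh0.le hr.1.le 2
    have hint1 : 0 ≤ Λ*(r^2 - r_h^2)*r^2 := by
      have : 0 ≤ r^2 - r_h^2 := by linarith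
      positivity
    have hint2 : (c - (Λ*r_h^2 - 1))*r^2 = 0 := by rw [hcdef]; ring
    linarith only [hint1, hint2, sq_nonneg (1 - (w r)^2)]
  -- pick a with -A ≤ c/2 beyond a
  obtain ⟨a, harh, haρ, haA⟩ : ∃ a, r_h < a ∧ a < ρ ∧ ∀ r, a ≤ r → r < ρ → -(A r) ≤ c/2 := by
    have hev : ∀ᶠ t in nhdsWithin ρ (Set.Iio ρ), -(c/2) < A t :=
      T.eventually (eventually_gt_nhds (by linarith))
    obtain ⟨l, hl, hsub⟩ := mem_nhdsLT_iff_exists_Ico_subset.mp hev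
    obtain ⟨a, ha1, ha2⟩ := exists_between (show max l r_h < ρ from max_lt hl hρ)
    refine ⟨a, lt_of_le_of_lt (le_max_right l r_h) ha1, ha2, fun r h1 h2 => ?_⟩
    have : -(c/2) < A r := hsub ⟨le_trans (le_trans (le_max_left l r_h) ha1.le) h1, h2⟩
    linarith
  have hmema : ∀ {x : ℝ}, a ≤ x → x < ρ → x ∈ Set.Ioo r_h ρ :=
    fun h1 h2 => ⟨lt_of_lt_of_le harh h1, h2⟩
  -- sharpened bound beyond a
  have hPa : ∀ r, a ≤ r → r < ρ →
      (1 - A r - Λ*r^2)*r^2 - (1 - (w r)^2)^2 ≤ -(c/2)*r^2 := by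
    intro r h1 h2
    have hb := hP r (hmema h1 h2)
    have hA2 := haA r h1 h2
    have hb2 : (-c - A r)*r^2 ≤ -(c/2)*r^2 :=
      mul_le_mul_of_nonneg_right (by linarith only [hA2]) (sq_nonneg r)
    linarith only [hb, hb2]
  -- derivative bound for H beyond a
  have hHD_le : ∀ r, a ≤ r → r < ρ →
      deriv (fun x => -(A x) * (deriv w x)^2 + (1 - (w x)^2)^2/(2*x^2)) r
        ≤ -(β*(deriv w r)^2) := by
    intro r h1 h2
    have hr := hmema h1 h2
    have hr0 : 0 < r := hrh0.trans hr.1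
    rw [(hHD r hr).deriv]
    have hPr := hPa r h1 h2
    have hAr := hAneg r hr
    have hnum : (deriv w r)^2 * (((1 - A r - Λ*r^2)*r^2 - (1 - (w r)^2)^2)
        + 2*A r*(deriv w r)^2*r^2) - (1 - (w r)^2)^2 ≤ -(c/2)*r^2*(deriv w r)^2 := by
      have t1 : (deriv w r)^2 * ((1 - A r - Λ*r^2)*r^2 - (1 - (w r)^2)^2)
          ≤ (deriv w r)^2 * (-(c/2)*r^2) := mul_le_mul_of_nonneg_left hPr (sq_nonneg _)
      have t2 : A r * (2*(deriv w r)^4*r^2) ≤ 0 :=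
        mul_nonpos_of_nonpos_of_nonneg hAr.le (by positivity)
      linarith [t1, t2, sq_nonneg (1 - (w r)^2)]
    rw [div_le_iff₀ (by positivity : (0:ℝ) < r^3)]
    have hcc : (c/2)*r^2*(deriv w r)^2 = β*ρ*r^2*(deriv w r)^2 := by
      rw [← hβc]; ring
    have hmono : 0 ≤ β*(deriv w r)^2*r^2*(ρ - r) :=
      mul_nonneg (mul_nonneg (mul_nonneg hβ0.le (sq_nonneg _)) (sq_nonneg _))
        (sub_nonneg.2 h2.le)
    linarith only [hnum, hcc, hmono]
  have hHD_le0 : ∀ r, a ≤ r → r < ρ →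
      deriv (fun x => -(A x) * (deriv w x)^2 + (1 - (w x)^2)^2/(2*x^2)) r ≤ 0 := by
    intro r h1 h2
    have := hHD_le r h1 h2
    have h3 : 0 ≤ β*(deriv w r)^2 := by positivity
    linarith
  -- H is antitone beyond a
  have hHanti : ∀ s t, a ≤ s → s ≤ t → t < ρ →
      -(A t) * (deriv w t)^2 + (1 - (w t)^2)^2/(2*t^2)
        ≤ -(A s) * (deriv w s)^2 + (1 - (w s)^2)^2/(2*s^2) := by
    intro s t h1 h2 h3
    exact EYMaux.antitone_aux
      (f := fun x => -(A x) * (deriv w x)^2 + (1 - (w x)^2)^2/(2*x^2)) h2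
      (fun x hx => (hHD x (hmema (h1.trans hx.1) (lt_of_le_of_lt hx.2 h3))).differentiableAt)
      (fun x hx => hHD_le0 x (h1.trans hx.1.le) (hx.2.trans h3))
  obtain ⟨M, hMdef⟩ : ∃ M : ℝ, M = -(A a) * (deriv w a)^2 + (1 - (w a)^2)^2/(2*a^2) := ⟨_, rfl⟩
  have hM0 : 0 ≤ M := hMdef ▸ hH0 a ⟨harh, haρ⟩
  have hHleM : ∀ r, a ≤ r → r < ρ →
      -(A r) * (deriv w r)^2 + (1 - (w r)^2)^2/(2*r^2) ≤ M := by
    intro r h1 h2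
    rw [hMdef]
    exact hHanti a r le_rfl h1 h2
  have hqleM : ∀ r, a ≤ r → r < ρ → -(A r) * (deriv w r)^2 ≤ M := by
    intro r h1 h2
    have h3 := hHleM r h1 h2
    have hr0 : 0 < r := hrh0.trans (hmema h1 h2).1
    have h4 : 0 ≤ (1 - (w r)^2)^2/(2*r^2) := by positivity
    linarith
  -- w is bounded beyond a
  obtain ⟨S, hSdef⟩ : ∃ S : ℝ, S = 2*(2*M*ρ^2) + (2*M*ρ^2)^2 := ⟨_, rfl⟩
  have hS0 : 0 ≤ S := by rw [hSdef]; positivity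
  have hSb : ∀ r, a ≤ r → r < ρ → ((w r)*(1 - (w r)^2))^2 ≤ S := by
    intro r h1 h2
    have hr0 : 0 < r := hrh0.trans (hmema h1 h2).1
    have h3 := hHleM r h1 h2
    have h4 := hq0 r (hmema h1 h2)
    have h5 : (1 - (w r)^2)^2 ≤ 2*M*ρ^2 := by
      have h6 : (1 - (w r)^2)^2/(2*r^2) ≤ M := by linarith
      have h7 : (1 - (w r)^2)^2 ≤ M * (2*r^2) := (div_le_iff₀ (by positivity)).mp h6
      have h8 : r^2 ≤ ρ^2 := pow_le_pow_left₀ hr0.le h2.le 2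
      linarith only [h7, mul_nonneg hM0 (sub_nonneg.2 h8)]
    have k2 : (1 - (w r)^2)^2*(1 - (w r)^2)^2 ≤ (2*M*ρ^2)*(2*M*ρ^2) :=
      mul_self_le_mul_self (sq_nonneg _) h5
    have k1 : (0:ℝ) ≤ (1 - (w r)^2)^2*((1 - (w r)^2) + 1)^2 := by positivity
    rw [hSdef]
    linarith only [k1, k2, h5, show (0:ℝ) ≤ 2*M*ρ^2 by positivity, sq_nonneg (2*M*ρ^2)]
  -- bound on A' beyond a, and the linear bound on -A
  obtain ⟨C, hCdef⟩ : ∃ C : ℝ, C = 2*M/r_h + 1 := ⟨_, rfl⟩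
  have hC0 : 0 < C := by
    rw [hCdef]
    have : 0 ≤ 2*M/r_h := by positivity
    linarith
  have hA'le : ∀ r, a ≤ r → r < ρ → deriv A r ≤ C := by
    intro r h1 h2
    have hr := hmema h1 h2
    have hr0 : 0 < r := hrh0.trans hr.1
    have e1 := hE1 r hr
    have hrne : r ≠ 0 := ne_of_gt hr0
    have e1c : (r * deriv A r + 2 * A r * (deriv w r) ^ 2) * r^2
        = ((1 - A r - Λ*r^2)*r^2 - (1 - (w r)^2)^2) := by
      field_simp at e1; linear_combination e1
    have hPr := hPa r h1 h2
    have hqM := hqleM r h1 h2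
    have key : r * deriv A r ≤ 2*M := by
      have k1 : (r * deriv A r + 2 * A r * (deriv w r) ^ 2) * r^2 ≤ -(c/2)*r^2 := by
        rw [e1c]; exact hPr
      have hq2 : -(A r)*(deriv w r)^2*r^2 ≤ M*r^2 :=
        mul_le_mul_of_nonneg_right hqM (sq_nonneg r)
      have k2 : r * deriv A r * r^2 ≤ (2*M - c/2)*r^2 := by linarith only [k1, hq2]
      have k3 : r * deriv A r ≤ 2*M - c/2 :=
        le_of_mul_le_mul_right k2 (by positivity : (0:ℝ) < r^2)
      linarith
    rcases le_or_gt (deriv A r) 0 with h | h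
    · have : 0 ≤ 2*M/r_h := by positivity
      rw [hCdef]; linarith
    · have k4 : r_h * deriv A r ≤ r * deriv A r :=
        mul_le_mul_of_nonneg_right hr.1.le h.le
      have k5 : deriv A r ≤ 2*M/r_h := by
        rw [le_div_iff₀ hrh0]
        linarith
      rw [hCdef]; linarith
  have hAlin : ∀ r, a ≤ r → r < ρ → -(A r) ≤ C*(ρ - r) := by
    intro r h1 h2
    have key : ∀ t, r ≤ t → t < ρ → A t - C*t ≤ A r - C*r := by
      intro t ht1 ht2
      refine EYMaux.antitone_aux (f := fun y => A y - C*y) ht1 ?_ ?_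
      · intro x hx
        exact ((hder x (hmema (h1.trans hx.1) (lt_of_le_of_lt hx.2 ht2))).1.differentiableAt).sub
          (differentiableAt_id.const_mul C)
      · intro x hx
        have hx' : a ≤ x := h1.trans hx.1.le
        have hx'' : x < ρ := hx.2.trans ht2
        have hd : HasDerivAt (fun y => A y - C*y) (deriv A x - C*1) x :=
          ((hder x (hmema hx' hx'')).1).sub ((hasDerivAt_id x).const_mul C)
        rw [hd.deriv]
        have := hA'le x hx' hx''
        linarith
    have lim : Filter.Tendsto (fun t => A t - C*t) (nhdsWithin ρ (Set.Iio ρ))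
        (nhds (0 - C*ρ)) :=
      T.sub (Filter.Tendsto.mono_left ((continuous_const.mul continuous_id).tendsto ρ)
        nhdsWithin_le_nhds)
    have hle : 0 - C*ρ ≤ A r - C*r := by
      refine le_of_tendsto lim ?_
      filter_upwards [Ioo_mem_nhdsLT h2] with t ht
      exact key t ht.1.le ht.2
    linarith
  -- MVT: points with large q arbitrarily close to ρ
  have hmvt : ∀ s, a ≤ s → s < ρ → ∃ ξ, s < ξ ∧ ξ < ρ ∧ c/4 < -(A ξ)*(deriv w ξ)^2 := by
    intro s h1 h2
    have hAs : A s < 0 := hAneg s (hmema h1 h2)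
    have hev2 : ∀ᶠ t in nhdsWithin ρ (Set.Iio ρ), A s < A t ∧ t ∈ Set.Ioo s ρ := by
      have e1 : ∀ᶠ t in nhdsWithin ρ (Set.Iio ρ), A s < A t :=
        T.eventually (eventually_gt_nhds hAs)
      have e2 : ∀ᶠ t in nhdsWithin ρ (Set.Iio ρ), t ∈ Set.Ioo s ρ := by
        filter_upwards [Ioo_mem_nhdsLT h2] with t ht using ht
      exact e1.and e2
    obtain ⟨t, htA, hts⟩ := hev2.exists
    obtain ⟨ξ, hξ, hξd⟩ := exists_deriv_eq_slope A hts.1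
      (fun y hy => (((hder y (hmema (h1.trans hy.1)
        (lt_of_le_of_lt hy.2 hts.2))).1).differentiableAt.continuousAt).continuousWithinAt)
      (fun y hy => (((hder y (hmema (h1.trans hy.1.le)
        (hy.2.trans hts.2))).1).differentiableAt).differentiableWithinAt)
    have hξρ : ξ < ρ := hξ.2.trans hts.2
    have hξa : a ≤ ξ := h1.trans hξ.1.le
    have hξmem := hmema hξa hξρ
    have hξ0 : 0 < ξ := hrh0.trans hξmem.1
    have hA' : 0 < deriv A ξ := by
      rw [hξd]
      apply div_pos (by linarith) (by linarith [hts.1])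
    have e1 := hE1 ξ hξmem
    have hrne : ξ ≠ 0 := ne_of_gt hξ0
    have e1c : (ξ * deriv A ξ + 2 * A ξ * (deriv w ξ) ^ 2) * ξ^2
        = ((1 - A ξ - Λ*ξ^2)*ξ^2 - (1 - (w ξ)^2)^2) := by
      field_simp at e1; linear_combination e1
    have hPr := hPa ξ hξa hξρ
    refine ⟨ξ, hξ.1, hξρ, ?_⟩
    have k1 : (ξ * deriv A ξ + 2 * A ξ * (deriv w ξ) ^ 2) * ξ^2 ≤ -(c/2)*ξ^2 := by
      rw [e1c]; exact hPr
    have k2 : ξ * deriv A ξ + 2 * A ξ * (deriv w ξ) ^ 2 ≤ -(c/2) :=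
      le_of_mul_le_mul_right k1 (by positivity : (0:ℝ) < ξ^2)
    linarith only [k2, mul_pos hξ0 hA']
  -- barrier threshold
  obtain ⟨Tc, hTcdef⟩ : ∃ Tc : ℝ, Tc = (4/(c*r_h^2))*((4/c)*S + 1) := ⟨_, rfl⟩
  have hTc0 : 0 < Tc := by
    rw [hTcdef]
    have h1 : 0 < 4/(c*r_h^2) := by positivity
    have h2 : 0 < (4/c)*S + 1 := by positivity
    positivity
  obtain ⟨ε, hεdef⟩ : ∃ ε : ℝ, ε = min (c/2) ((c/8)/Tc) := ⟨_, rfl⟩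
  have hε0 : 0 < ε := by
    rw [hεdef]
    exact lt_min (by linarith) (div_pos (by linarith) hTc0)
  -- pick b with -A ≤ ε beyond b
  obtain ⟨b, hab, hbρ, hAb⟩ : ∃ b, a < b ∧ b < ρ ∧ ∀ r, b ≤ r → r < ρ → -(A r) ≤ ε := by
    have hev : ∀ᶠ t in nhdsWithin ρ (Set.Iio ρ), -ε < A t :=
      T.eventually (eventually_gt_nhds (by linarith))
    obtain ⟨l, hl, hsub⟩ := mem_nhdsLT_iff_exists_Ico_subset.mp hev
    obtain ⟨b, hb1, hb2⟩ := exists_between (show max l a < ρ from max_lt hl haρ)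
    refine ⟨b, lt_of_le_of_lt (le_max_right l a) hb1, hb2, fun r h1 h2 => ?_⟩
    have : -ε < A r := hsub ⟨le_trans (le_trans (le_max_left l a) hb1.le) h1, h2⟩
    linarith
  -- the barrier: q' < 0 whenever q ≥ c/8 beyond b
  have hbar : ∀ x, b ≤ x → x < ρ → c/8 ≤ -(A x)*(deriv w x)^2 →
      deriv (fun y => -(A y)*(deriv w y)^2) x < 0 := by
    intro x hx1 hx2 hq8
    have hxa : a ≤ x := hab.le.trans hx1
    have hxmem := hmema hxa hx2
    have hx0 : 0 < x := hrh0.trans hxmem.1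
    rw [(hqD x hxmem).deriv]
    apply div_neg_of_neg_of_pos _ (by positivity : (0:ℝ) < x^3)
    -- numerator < 0
    have hAx := hAneg x hxmem
    have hPx := hPa x hxa hx2
    have hSx := hSb x hxa hx2
    have hAbx := hAb x hx1 hx2
    -- w'^2 is large
    have hεT : ε*Tc ≤ c/8 := by
      have h9 : ε ≤ (c/8)/Tc := hεdef ▸ min_le_right _ _
      calc ε*Tc ≤ ((c/8)/Tc)*Tc := mul_le_mul_of_nonneg_right h9 hTc0.le
        _ = c/8 := div_mul_cancel₀ _ (ne_of_gt hTc0)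
    have hcw1 : c/8 ≤ ε*(deriv w x)^2 := by
      have h10 : -(A x)*(deriv w x)^2 ≤ ε*(deriv w x)^2 :=
        mul_le_mul_of_nonneg_right hAbx (sq_nonneg _)
      linarith
    have hw1T : Tc ≤ (deriv w x)^2 :=
      le_of_mul_le_mul_left (le_trans hεT hcw1) hε0
    -- assemble
    have hrr : r_h^2 ≤ x^2 := pow_le_pow_left₀ hrh0.le hxmem.1.le 2
    have hw1pos : 0 < (deriv w x)^2 := lt_of_lt_of_le hTc0 hw1T
    have hx2pos : 0 < x^2 := by positivity
    have f1 : (deriv w x)^2 * ((1 - A x - Λ*x^2)*x^2 - (1 - (w x)^2)^2)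
        ≤ (deriv w x)^2 * (-(c/2)*x^2) := mul_le_mul_of_nonneg_left hPx (sq_nonneg _)
    have f2 : 0 ≤ -(A x) * ((deriv w x)^2*(deriv w x)^2*x^2) :=
      mul_nonneg (by linarith only [hAx]) (by positivity)
    -- c^2 x^2 w'^2 ≥ 16 S + 4 c
    have s1 : r_h^2*Tc ≤ r_h^2*(deriv w x)^2 :=
      mul_le_mul_of_nonneg_left hw1T (sq_nonneg r_h)
    have s2 : r_h^2*(deriv w x)^2 ≤ x^2*(deriv w x)^2 :=
      mul_le_mul_of_nonneg_right hrr (sq_nonneg _)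
    have s3 : c^2*(r_h^2*Tc) ≤ c^2*(x^2*(deriv w x)^2) :=
      mul_le_mul_of_nonneg_left (s1.trans s2) (sq_nonneg c)
    have f6 : c^2*(r_h^2*Tc) = 16*S + 4*c := by
      rw [hTcdef]; field_simp; ring
    have hx2w : 16*S + 4*c ≤ c^2*(x^2*(deriv w x)^2) := by
      linarith only [s3, f6]
    -- square comparison : cross term is dominated
    have hY2 : (2*x*(deriv w x)*((w x)*(1 - (w x)^2)))^2
        ≤ 4*(x^2*(deriv w x)^2)*S := by
      have e : (2*x*(deriv w x)*((w x)*(1 - (w x)^2)))^2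
          = 4*(x^2*(deriv w x)^2)*((w x)*(1 - (w x)^2))^2 := by ring
      rw [e]
      exact mul_le_mul_of_nonneg_left hSx (by positivity)
    have t1 : (16*S + 4*c)*(x^2*(deriv w x)^2)
        ≤ (c^2*(x^2*(deriv w x)^2))*(x^2*(deriv w x)^2) :=
      mul_le_mul_of_nonneg_right hx2w (by positivity)
    have hcx : 0 < c*(x^2*(deriv w x)^2) := mul_pos hc (mul_pos hx2pos hw1pos)
    have hX2 : (2*x*(deriv w x)*((w x)*(1 - (w x)^2)))^2 < (c/2*(x^2*(deriv w x)^2))^2 := by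
      nlinarith only [hY2, t1, hcx]
    have hXpos : 0 < c/2*(x^2*(deriv w x)^2) := by positivity
    have keylt : ∀ X Y : ℝ, 0 < X → Y^2 < X^2 → Y < X := by
      intro X Y h1 h2
      nlinarith only [h1, h2]
    have hYX := keylt _ _ hXpos hX2
    linarith only [f1, f2, hYX]
  -- get the base point ξ₀ and show q > c/8 from ξ₀ on
  obtain ⟨ξ₀, hξ₀b, hξ₀ρ, hξ₀q⟩ := hmvt b (hab.le) hbρ
  have hlow : ∀ x, ξ₀ ≤ x → x < ρ → c/8 < -(A x)*(deriv w x)^2 := by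
    intro x hx1 hx2
    by_contra hle
    push_neg at hle
    have hxb : b ≤ x := hξ₀b.le.trans hx1
    have hxa : a ≤ x := hab.le.trans hxb
    obtain ⟨ξ₁, hξ₁x, hξ₁ρ, hξ₁q⟩ := hmvt x hxa hx2
    -- sup of points in [x, ξ₁] where q ≤ c/8
    have hsubIoo : Set.Icc x ξ₁ ⊆ Set.Ioo r_h ρ := fun y hy =>
      ⟨lt_of_lt_of_le (hmema hxa hx2).1 hy.1, lt_of_le_of_lt hy.2 hξ₁ρ⟩
    have hcontq : ContinuousOn (fun y => -(A y)*(deriv w y)^2) (Set.Icc x ξ₁) :=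
      fun y hy => ((hqD y (hsubIoo hy)).continuousAt).continuousWithinAt
    have hSeq : {y | y ∈ Set.Icc x ξ₁ ∧ -(A y)*(deriv w y)^2 ≤ c/8}
        = Set.Icc x ξ₁ ∩ (fun y => -(A y)*(deriv w y)^2)⁻¹' (Set.Iic (c/8)) := by
      ext y; simp [Set.mem_Iic, Set.mem_inter_iff, Set.mem_preimage]
    have hclosed : IsClosed {y | y ∈ Set.Icc x ξ₁ ∧ -(A y)*(deriv w y)^2 ≤ c/8} := by
      rw [hSeq]
      exact hcontq.preimage_isClosed_of_isClosed isClosed_Icc isClosed_Iic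
    have hne : x ∈ {y | y ∈ Set.Icc x ξ₁ ∧ -(A y)*(deriv w y)^2 ≤ c/8} :=
      ⟨Set.left_mem_Icc.2 hξ₁x.le, hle⟩
    have hbdd : BddAbove {y | y ∈ Set.Icc x ξ₁ ∧ -(A y)*(deriv w y)^2 ≤ c/8} :=
      ⟨ξ₁, fun y hy => hy.1.2⟩
    obtain ⟨hs0mem, hs0q⟩ := hclosed.csSup_mem ⟨x, hne⟩ hbdd
    set s0 := sSup {y | y ∈ Set.Icc x ξ₁ ∧ -(A y)*(deriv w y)^2 ≤ c/8} with hs0def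
    have hs0ξ₁ : s0 < ξ₁ := by
      rcases lt_or_eq_of_le hs0mem.2 with h | h
      · exact h
      · exfalso; rw [h] at hs0q; linarith
    have hstrict := EYMaux.strict_anti_aux (f := fun y => -(A y)*(deriv w y)^2) hs0ξ₁
      (fun y hy => ((hqD y (hsubIoo ⟨hs0mem.1.trans hy.1, hy.2⟩)).continuousAt))
      (by
        intro y hy
        have hyb : b ≤ y := hxb.trans (hs0mem.1.trans hy.1.le)
        have hyρ : y < ρ := hy.2.trans hξ₁ρ
        have hynot : ¬(-(A y)*(deriv w y)^2 ≤ c/8) := by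
          intro hmem
          have : y ≤ s0 := le_csSup hbdd ⟨⟨hs0mem.1.trans hy.1.le, hy.2.le⟩, hmem⟩
          linarith [hy.1]
        exact hbar y hyb hyρ (by linarith [lt_of_not_ge hynot]))
    -- q ξ₁ < q s0 ≤ c/8 < c/4 < q ξ₁ : contradiction
    have hstrict' : -(A ξ₁)*(deriv w ξ₁)^2 < -(A s0)*(deriv w s0)^2 := hstrict
    linarith [hstrict', hs0q, hξ₁q, hc]
  -- final contradiction using G = H - K log(ρ - ·)
  obtain ⟨K, hKdef⟩ : ∃ K : ℝ, K = c^2/(16*ρ*C) := ⟨_, rfl⟩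
  have hK0 : 0 < K := by
    rw [hKdef]
    exact div_pos (by positivity) (mul_pos (by positivity) hC0)
  have hξ₀a : a ≤ ξ₀ := hab.le.trans hξ₀b.le
  have hGder : ∀ x, ξ₀ ≤ x → x < ρ →
      HasDerivAt (fun y => (-(A y) * (deriv w y)^2 + (1 - (w y)^2)^2/(2*y^2))
        - K*Real.log (ρ - y))
      (deriv (fun y => -(A y) * (deriv w y)^2 + (1 - (w y)^2)^2/(2*y^2)) x + K/(ρ - x)) x := by
    intro x hx1 hx2
    have hxa : a ≤ x := hξ₀a.trans hx1
    have hxmem := hmema hxa hx2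
    have hρx : (0:ℝ) < ρ - x := by linarith
    have hsub : HasDerivAt (fun y : ℝ => ρ - y) (-1) x := (hasDerivAt_id x).const_sub ρ
    have hlog : HasDerivAt (fun y => Real.log (ρ - y)) ((ρ - x)⁻¹ * -1) x :=
      (Real.hasDerivAt_log (ne_of_gt hρx)).comp x hsub
    have hH' := hHD x hxmem
    have := hH'.sub (hlog.const_mul K)
    refine this.congr_deriv (Eq.symm ?_)
    rw [hH'.deriv]
    ring
  have hGd_le : ∀ x, ξ₀ ≤ x → x < ρ →
      deriv (fun y => -(A y) * (deriv w y)^2 + (1 - (w y)^2)^2/(2*y^2)) x + K/(ρ - x) ≤ 0 := by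
    intro x hx1 hx2
    have hxa : a ≤ x := hξ₀a.trans hx1
    have hρx : (0:ℝ) < ρ - x := by linarith
    have hH'le := hHD_le x hxa hx2
    have hql := hlow x hx1 hx2
    have hAl := hAlin x hxa hx2
    have h1 : c/8 ≤ C*(ρ-x)*(deriv w x)^2 := by
      have h2 : -(A x)*(deriv w x)^2 ≤ C*(ρ-x)*(deriv w x)^2 :=
        mul_le_mul_of_nonneg_right hAl (sq_nonneg _)
      linarith
    have hc8 : c/8 = β*ρ/4 := by rw [← hβc]; ring
    have h1' : β*ρ/4 ≤ C*(ρ-x)*(deriv w x)^2 := by linarith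
    have hKle : K/(ρ-x) ≤ β*(deriv w x)^2 := by
      rw [div_le_iff₀ hρx, hKdef, div_le_iff₀ (by positivity : (0:ℝ) < 16*ρ*C)]
      have hc2 : c^2 = 4*β^2*ρ^2 := by rw [← hβc]; ring
      linarith only [mul_le_mul_of_nonneg_left h1'
        (show (0:ℝ) ≤ 16*β*ρ by positivity), hc2]
    linarith
  -- antitone of G from ξ₀
  have hGanti : ∀ t, ξ₀ ≤ t → t < ρ →
      (-(A t) * (deriv w t)^2 + (1 - (w t)^2)^2/(2*t^2)) - K*Real.log (ρ - t)
        ≤ (-(A ξ₀) * (deriv w ξ₀)^2 + (1 - (w ξ₀)^2)^2/(2*ξ₀^2)) - K*Real.log (ρ - ξ₀) := by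
    intro t ht1 ht2
    refine EYMaux.antitone_aux
      (f := fun y => (-(A y) * (deriv w y)^2 + (1 - (w y)^2)^2/(2*y^2))
        - K*Real.log (ρ - y)) ht1 ?_ ?_
    · intro y hy
      exact (hGder y hy.1 (lt_of_le_of_lt hy.2 ht2)).differentiableAt
    · intro y hy
      rw [(hGder y hy.1.le (hy.2.trans ht2)).deriv]
      exact hGd_le y hy.1.le (hy.2.trans ht2)
  -- choose the evaluation point
  obtain ⟨G0, hG0def⟩ : ∃ G0 : ℝ,
      G0 = (-(A ξ₀) * (deriv w ξ₀)^2 + (1 - (w ξ₀)^2)^2/(2*ξ₀^2)) - K*Real.log (ρ - ξ₀) :=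
    ⟨_, rfl⟩
  obtain ⟨δ, hδdef⟩ : ∃ δ : ℝ, δ = min ((ρ - ξ₀)/2) (Real.exp (-(G0 + 1)/K)) := ⟨_, rfl⟩
  have hδ0 : 0 < δ := by
    rw [hδdef]
    exact lt_min (by linarith) (Real.exp_pos _)
  obtain ⟨t, htdef⟩ : ∃ t : ℝ, t = ρ - δ := ⟨_, rfl⟩
  have hδhalf : δ ≤ (ρ - ξ₀)/2 := hδdef ▸ min_le_left _ _
  have hξ₀t : ξ₀ ≤ t := by rw [htdef]; linarith
  have htρ : t < ρ := by rw [htdef]; linarith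
  have hρt : ρ - t = δ := by rw [htdef]; ring
  have hlogδ : Real.log δ ≤ -(G0 + 1)/K := by
    calc Real.log δ ≤ Real.log (Real.exp (-(G0 + 1)/K)) := by
          apply Real.log_le_log hδ0
          rw [hδdef]; exact min_le_right _ _
      _ = -(G0 + 1)/K := Real.log_exp _
  have hKlog : K*Real.log δ ≤ -(G0 + 1) := by
    have := mul_le_mul_of_nonneg_left hlogδ hK0.le
    have hid : K * (-(G0 + 1)/K) = -(G0 + 1) := by
      field_simp
    linarith
  have hGt := hGanti t hξ₀t htρ
  rw [hρt, ← hG0def] at hGt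
  have hHt := hH0 t (hmema (hξ₀a.trans hξ₀t) htρ)
  -- H t ≤ G0 + K log δ ≤ -1 < 0 ≤ H t
  linarith
end

section
/- If ρ < ∞ and A(r) converges as r → ρ from the left to a strictly negative limit A_ρ < 0, then w' is bounded on (r_h, ρ); that is, the limsup of w'(r)² as r → ρ⁻ is finite. -/
lemma contDiffAt_deriv_aux {w : ℝ → ℝ} {r : ℝ} (h : ContDiffAt ℝ 2 w r) :
    ContDiffAt ℝ 1 (deriv w) r := by
  obtain ⟨u, hu, hcd⟩ := h.contDiffOn (le_refl 2) (by simp)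
  obtain ⟨v, hvu, hvopen, hv⟩ := mem_nhds_iff.1 hu
  exact ((hcd.mono hvu).deriv_of_isOpen hvopen (by norm_num)).contDiffAt
    (hvopen.mem_nhds hv)

set_option maxHeartbeats 1000000 in
/-- If the maximal interval `[r_h, ρ)` of a noncompact solution of the static
spherically symmetric Einstein–SU(2) Yang–Mills equations with cosmological
constant `Λ` is finite (`ρ < ∞`) and `A(r)` converges as `r → ρ⁻` to a
strictly negative limit, then `w'` is bounded on `(r_h, ρ)`; that is, the
limsup of `w'(r)²` as `r → ρ⁻` is finite. -/
theorem wprime_bounded_of_A_negative_limit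
    (Λ r_h ρ : ℝ) (hΛ : 0 < Λ) (hrh : Real.sqrt 2 < r_h)
    (hΛrh : 1 < Λ * r_h ^ 2) (hρ : r_h < ρ)
    (A w : ℝ → ℝ)
    (hA : ∀ r : ℝ, r_h ≤ r → r < ρ → ContDiffAt ℝ 1 A r)
    (hw : ∀ r : ℝ, r_h ≤ r → r < ρ → ContDiffAt ℝ 2 w r)
    (hE1 : ∀ r ∈ Set.Ioo r_h ρ,
      r * deriv A r + 2 * A r * (deriv w r) ^ 2
        = 1 - A r - (1 - (w r) ^ 2) ^ 2 / r ^ 2 - Λ * r ^ 2)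
    (hE2 : ∀ r ∈ Set.Ioo r_h ρ,
      r ^ 2 * A r * deriv (deriv w) r
        + r * (1 - A r - (1 - (w r) ^ 2) ^ 2 / r ^ 2 - Λ * r ^ 2) * deriv w r
        + w r * (1 - (w r) ^ 2) = 0)
    (hArh : A r_h = 0)
    (hAneg : ∀ r ∈ Set.Ioo r_h ρ, A r < 0)
    (hwrh : (1 - (w r_h) ^ 2) ^ 2 < 1)
    (A_ρ : ℝ) (hAρneg : A_ρ < 0)
    (hAlim : Filter.Tendsto A (nhdsWithin ρ (Set.Iio ρ)) (nhds A_ρ)) :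
    (∃ M : ℝ, ∀ r ∈ Set.Ioo r_h ρ, (deriv w r) ^ 2 ≤ M)
    ∧ Filter.limsup (fun r : ℝ => (((deriv w r) ^ 2 : ℝ) : EReal))
        (nhdsWithin ρ (Set.Iio ρ)) < ⊤ := by
  have hrh0 : 0 < r_h := lt_trans (Real.sqrt_pos.2 two_pos) hrh
  set c : ℝ := -A_ρ / 2 with hc_def
  have hc0 : 0 < c := by simp only [hc_def]; linarith
  set B : ℝ := -(3/2) * A_ρ with hB_def
  have hB0 : 0 < B := by simp only [hB_def]; linarith
  set K : ℝ := (1 + B) / (r_h * c) with hK_def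
  have hK0 : 0 < K := by positivity
  -- choose r₀ with A ∈ (-B, -c) on [r₀, ρ)
  have hev : {r : ℝ | |A r - A_ρ| < c} ∈ nhdsWithin ρ (Set.Iio ρ) := by
    have := Metric.tendsto_nhds.1 hAlim c hc0
    simp only [Real.dist_eq] at this; exact this
  obtain ⟨l, hl, hlsub⟩ := (mem_nhdsLT_iff_exists_Ioo_subset).1 hev
  set r₀ : ℝ := (max l r_h + ρ) / 2 with hr₀_def
  have hmaxlt : max l r_h < ρ := max_lt (Set.mem_Iio.1 hl) hρ
  have hr₀ρ : r₀ < ρ := by simp only [hr₀_def]; linarith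
  have hr₀l : l < r₀ := by
    have := le_max_left l r_h; simp only [hr₀_def]; linarith
  have hr₀rh : r_h < r₀ := by
    have := le_max_right l r_h; simp only [hr₀_def]; linarith
  have hAband : ∀ r, r₀ ≤ r → r < ρ → A r < -c ∧ -B < A r := by
    intro r h1 h2
    have : |A r - A_ρ| < c := hlsub ⟨lt_of_lt_of_le hr₀l h1, h2⟩
    rw [abs_lt] at this
    constructor
    · simp only [hc_def] at this ⊢; linarith [this.2]
    · simp only [hB_def, hc_def] at this ⊢; linarith [this.1]
  -- the energy function and its derivative
  set E : ℝ → ℝ := fun r => -(A r) * (deriv w r)^2 + (1 - (w r)^2)^2 / (2*r^2) with hE_def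
  set D : ℝ → ℝ := fun r => -(deriv A r) * (deriv w r)^2
      - 2*(A r)*(deriv w r)*(deriv (deriv w) r)
      - 2*(w r)*(deriv w r)*(1-(w r)^2)/r^2 - (1-(w r)^2)^2/r^3 with hD_def
  have hderE : ∀ r, r_h ≤ r → r < ρ → HasDerivAt E (D r) r := by
    intro r h1 h2
    have hr0 : (0:ℝ) < r := lt_of_lt_of_le hrh0 h1
    have hA' : HasDerivAt A (deriv A r) r :=
      ((hA r h1 h2).differentiableAt (by norm_num)).hasDerivAt
    have hwd : HasDerivAt w (deriv w r) r :=
      ((hw r h1 h2).differentiableAt (by norm_num)).hasDerivAt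
    have hw2 : HasDerivAt (deriv w) (deriv (deriv w) r) r :=
      ((contDiffAt_deriv_aux (hw r h1 h2)).differentiableAt (by norm_num)).hasDerivAt
    have hden : 2*r^2 ≠ 0 := by positivity
    have total := (hA'.neg.mul (hw2.pow 2)).add
      ((((hwd.pow 2).const_sub 1).pow 2).div ((hasDerivAt_pow 2 r).const_mul 2) hden)
    refine total.congr_deriv ?_
    simp only [hD_def, Pi.pow_apply, Pi.neg_apply, Nat.cast_ofNat]
    field_simp
    ring
  -- the key differential inequality on [r₀, ρ)
  have hElow : ∀ r, r₀ ≤ r → r < ρ → c * (deriv w r)^2 ≤ E r := by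
    intro r h1 h2
    have hr0 : (0:ℝ) < r := lt_of_lt_of_le (lt_trans hrh0 hr₀rh) h1
    have hAc := (hAband r h1 h2).1
    have hnn : 0 ≤ (1 - (w r)^2)^2 / (2*r^2) := by positivity
    simp only [hE_def]
    nlinarith [sq_nonneg (deriv w r)]
  have hDineq : ∀ r, r₀ ≤ r → r < ρ → D r ≤ K * E r := by
    intro r h1 h2
    have hrhr : r_h < r := lt_of_lt_of_le hr₀rh h1
    have hr0 : (0:ℝ) < r := lt_trans hrh0 hrhr
    have hIoo : r ∈ Set.Ioo r_h ρ := ⟨hrhr, h2⟩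
    have e1 := hE1 r hIoo
    have e2 := hE2 r hIoo
    obtain ⟨hAc, hAB⟩ := hAband r h1 h2
    have hA0 : A r ≠ 0 := ne_of_lt (by linarith)
    have hr0' : r ≠ 0 := ne_of_gt hr0
    have hdA : deriv A r
        = ((1 - A r - (1-(w r)^2)^2/r^2 - Λ*r^2) - 2*(A r)*(deriv w r)^2)/r := by
      rw [eq_div_iff hr0']
      linarith [e1]
    have hddw : deriv (deriv w) r
        = -(r*(1 - A r - (1-(w r)^2)^2/r^2 - Λ*r^2)*(deriv w r) + (w r)*(1-(w r)^2))
          / (r^2 * A r) := by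
      rw [eq_div_iff (mul_ne_zero (pow_ne_zero 2 hr0') hA0)]
      linarith [e2]
    have hDval : D r = (1 - A r - (1-(w r)^2)^2/r^2 - Λ*r^2) * (deriv w r)^2 / r
        + 2*(A r)*(deriv w r)^4/r - (1-(w r)^2)^2/r^3 := by
      simp only [hD_def]
      rw [hdA, hddw]
      field_simp
      ring
    -- bound each term
    have hF : (1 - A r - (1-(w r)^2)^2/r^2 - Λ*r^2) ≤ 1 + B := by
      have h3 : 0 ≤ (1-(w r)^2)^2/r^2 := by positivity
      have h4 : 0 ≤ Λ*r^2 := by positivity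
      linarith
    have hstep1 : (1 - A r - (1-(w r)^2)^2/r^2 - Λ*r^2) * (deriv w r)^2 / r
        ≤ (1+B) * (deriv w r)^2 / r := by
      apply div_le_div_of_nonneg_right ?_ hr0.le
      exact mul_le_mul_of_nonneg_right hF (sq_nonneg _)
    have hstep2 : (1+B) * (deriv w r)^2 / r ≤ (1+B) * (deriv w r)^2 / r_h := by
      apply div_le_div_of_nonneg_left (by positivity) hrh0 (le_of_lt hrhr)
    have hstep3 : 2*(A r)*(deriv w r)^4/r ≤ 0 := by
      apply div_nonpos_of_nonpos_of_nonneg ?_ hr0.le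
      have h4 : (0:ℝ) ≤ (deriv w r)^4 := by positivity
      exact mul_nonpos_iff.2 (Or.inr ⟨by linarith, h4⟩)
    have hstep4 : 0 ≤ (1-(w r)^2)^2/r^3 := by positivity
    have hstep5 : (1+B) * (deriv w r)^2 / r_h ≤ K * E r := by
      have hlow := hElow r h1 h2
      have : K * (c * (deriv w r)^2) ≤ K * E r :=
        mul_le_mul_of_nonneg_left hlow (le_of_lt hK0)
      have heq : (1+B) * (deriv w r)^2 / r_h = K * (c * (deriv w r)^2) := by
        rw [hK_def]
        field_simp
      exact le_trans (le_of_eq heq) this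
    rw [hDval]
    linarith
  -- Gronwall via monotonicity of G = E * exp(-K r)
  set G : ℝ → ℝ := fun r => E r * Real.exp (-(K*r)) with hG_def
  have hderG : ∀ r, r_h ≤ r → r < ρ →
      HasDerivAt G ((D r - K * E r) * Real.exp (-(K*r))) r := by
    intro r h1 h2
    have hE' := hderE r h1 h2
    have hlin : HasDerivAt (fun x : ℝ => -(K*x)) (-K) r := by
      have := ((hasDerivAt_id' r).const_mul K).neg; rw [mul_one] at this; exact this
    have hexp := hlin.exp
    have := hE'.mul hexp
    refine this.congr_deriv ?_
    ring
  have hanti : AntitoneOn G (Set.Ico r₀ ρ) := by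
    apply antitoneOn_of_deriv_nonpos (convex_Ico _ _)
    · intro x hx
      exact ((hderG x (le_of_lt (lt_of_lt_of_le hr₀rh hx.1)) hx.2).differentiableAt).continuousAt.continuousWithinAt
    · rw [interior_Ico]
      intro x hx
      exact (hderG x (le_of_lt (lt_trans hr₀rh hx.1)) hx.2).differentiableAt.differentiableWithinAt
    · rw [interior_Ico]
      intro x hx
      rw [(hderG x (le_of_lt (lt_trans hr₀rh hx.1)) hx.2).deriv]
      have hle := hDineq x (le_of_lt hx.1) hx.2
      exact mul_nonpos_iff.2 (Or.inr ⟨by linarith, (Real.exp_pos _).le⟩)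
  have hE0 : 0 ≤ E r₀ := by
    have := hElow r₀ le_rfl hr₀ρ
    nlinarith [sq_nonneg (deriv w r₀)]
  set C₁ : ℝ := E r₀ * Real.exp (-(K*r₀)) * Real.exp (K*ρ) with hC₁_def
  have hEbound : ∀ r, r₀ ≤ r → r < ρ → E r ≤ C₁ := by
    intro r h1 h2
    have hGle : G r ≤ G r₀ := hanti (Set.left_mem_Ico.2 hr₀ρ) ⟨h1, h2⟩ h1
    have hrw : E r = G r * Real.exp (K*r) := by
      simp only [hG_def]
      rw [mul_assoc, ← Real.exp_add]
      simp
    rw [hrw]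
    calc G r * Real.exp (K*r) ≤ G r₀ * Real.exp (K*r) :=
          mul_le_mul_of_nonneg_right hGle (Real.exp_pos _).le
      _ ≤ G r₀ * Real.exp (K*ρ) := by
          apply mul_le_mul_of_nonneg_left (Real.exp_le_exp.2 ?_) ?_
          · nlinarith
          · exact mul_nonneg hE0 (Real.exp_pos _).le
      _ = C₁ := rfl
  -- bound on the compact part [r_h, r₀]
  have hcont : ContinuousOn (fun r => (deriv w r)^2) (Set.Icc r_h r₀) := by
    intro x hx
    have hx2 : x < ρ := lt_of_le_of_lt hx.2 hr₀ρ
    exact (((contDiffAt_deriv_aux (hw x hx.1 hx2)).continuousAt).pow 2).continuousWithinAt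
  obtain ⟨C₂, hC₂⟩ := (isCompact_Icc (a := r_h) (b := r₀)).exists_bound_of_continuousOn hcont
  set M : ℝ := max (C₁ / c) C₂ with hM_def
  have hM : ∀ r ∈ Set.Ioo r_h ρ, (deriv w r)^2 ≤ M := by
    rintro r ⟨hr1, hr2⟩
    rcases le_total r r₀ with h | h
    · have := hC₂ r ⟨le_of_lt hr1, h⟩
      have h2 : (deriv w r)^2 ≤ C₂ :=
        le_trans (le_abs_self _) (by simpa [Real.norm_eq_abs] using this)
      exact le_trans h2 (le_max_right _ _)
    · have h3 := hElow r h hr2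
      have h4 := hEbound r h hr2
      have : (deriv w r)^2 ≤ C₁ / c := by
        rw [le_div_iff₀ hc0]
        nlinarith
      exact le_trans this (le_max_left _ _)
  refine ⟨⟨M, hM⟩, ?_⟩
  have hev2 : ∀ᶠ r in nhdsWithin ρ (Set.Iio ρ),
      (((deriv w r)^2 : ℝ) : EReal) ≤ (M : EReal) := by
    have h1 : ∀ᶠ r in nhdsWithin ρ (Set.Iio ρ), r ∈ Set.Ioi r_h :=
      Filter.Eventually.filter_mono nhdsWithin_le_nhds (isOpen_Ioi.eventually_mem hρ)
    have h2 : ∀ᶠ r in nhdsWithin ρ (Set.Iio ρ), r ∈ Set.Iio ρ :=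
      eventually_mem_nhdsWithin
    filter_upwards [h1, h2] with r ha hb
    exact EReal.coe_le_coe_iff.2 (hM r ⟨ha, hb⟩)
  exact lt_of_le_of_lt (Filter.limsup_le_of_le (by isBoundedDefault) hev2)
    (EReal.coe_lt_top M)
end

section
/- If ρ < ∞ and w' is bounded on (r_h, ρ), then A' is bounded on (r_h, ρ): there exists M > 0 such that |A'(r)| ≤ M for all r ∈ (r_h, ρ). -/
set_option maxHeartbeats 0

open Set Filter Real

lemma contAt_deriv' {f : ℝ → ℝ} {x : ℝ} (h : ContDiffAt ℝ 1 f x) :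
    ContinuousAt (deriv f) x := by
  obtain ⟨u, huo, hxu, hcd⟩ := h.contDiffOn' le_rfl (by simp)
  rw [Set.insert_eq_of_mem (Set.mem_univ x), Set.univ_inter] at hcd
  exact (hcd.continuousOn_deriv_of_isOpen huo le_rfl).continuousAt (huo.mem_nhds hxu)

/-- If the maximal interval `[r_h, ρ)` of a noncompact solution of the static
spherically symmetric Einstein–SU(2) Yang–Mills equations with cosmological
constant `Λ` is finite (`ρ < ∞`) and `w'` is bounded on `(r_h, ρ)`, then
`A'` is bounded on `(r_h, ρ)`. -/
theorem Aprime_bounded_of_wprime_bounded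
    (Λ r_h ρ : ℝ) (hΛ : 0 < Λ) (hrh : Real.sqrt 2 < r_h)
    (hΛrh : 1 < Λ * r_h ^ 2) (hρ : r_h < ρ)
    (A w : ℝ → ℝ)
    (hA : ∀ r : ℝ, r_h ≤ r → r < ρ → ContDiffAt ℝ 1 A r)
    (hw : ∀ r : ℝ, r_h ≤ r → r < ρ → ContDiffAt ℝ 2 w r)
    (hE1 : ∀ r ∈ Set.Ioo r_h ρ,
      r * deriv A r + 2 * A r * (deriv w r) ^ 2
        = 1 - A r - (1 - (w r) ^ 2) ^ 2 / r ^ 2 - Λ * r ^ 2)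
    (hE2 : ∀ r ∈ Set.Ioo r_h ρ,
      r ^ 2 * A r * deriv (deriv w) r
        + r * (1 - A r - (1 - (w r) ^ 2) ^ 2 / r ^ 2 - Λ * r ^ 2) * deriv w r
        + w r * (1 - (w r) ^ 2) = 0)
    (hArh : A r_h = 0)
    (hAneg : ∀ r ∈ Set.Ioo r_h ρ, A r < 0)
    (hwrh : (1 - (w r_h) ^ 2) ^ 2 < 1)
    (hwbdd : ∃ N : ℝ, ∀ r ∈ Set.Ioo r_h ρ, |deriv w r| ≤ N) :
    ∃ M > 0, ∀ r ∈ Set.Ioo r_h ρ, |deriv A r| ≤ M := by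
  obtain ⟨N, hN⟩ := hwbdd
  have hrh0 : 0 < r_h := lt_trans (Real.sqrt_pos.mpr (by norm_num)) hrh
  have hN0 : 0 ≤ N :=
    le_trans (abs_nonneg _) (hN ((r_h + ρ)/2) ⟨by linarith, by linarith⟩)
  -- differentiability
  have hAd : ∀ x : ℝ, r_h ≤ x → x < ρ → DifferentiableAt ℝ A x :=
    fun x h1 h2 => (hA x h1 h2).differentiableAt one_ne_zero
  have hwd : ∀ x : ℝ, r_h ≤ x → x < ρ → DifferentiableAt ℝ w x :=
    fun x h1 h2 => (hw x h1 h2).differentiableAt two_ne_zero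
  -- continuity of derivatives at r_h
  have hcA' : ContinuousAt (deriv A) r_h := contAt_deriv' (hA r_h le_rfl hρ)
  have hcw' : ContinuousAt (deriv w) r_h :=
    contAt_deriv' ((hw r_h le_rfl hρ).of_le one_le_two)
  -- deriv w bound at r_h
  have hNrh : |deriv w r_h| ≤ N := by
    have ht : Filter.Tendsto (fun r => |deriv w r|) (nhdsWithin r_h (Set.Ioi r_h))
        (nhds (|deriv w r_h|)) := (hcw'.abs).continuousWithinAt.tendsto
    refine le_of_tendsto ht ?_
    filter_upwards [Ioo_mem_nhdsGT_of_mem ⟨le_refl r_h, hρ⟩] with y hy using hN y hy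
  have hNIco : ∀ x ∈ Set.Ico r_h ρ, |deriv w x| ≤ N := by
    rintro x ⟨h1, h2⟩
    rcases eq_or_lt_of_le h1 with rfl | h1
    · exact hNrh
    · exact hN x ⟨h1, h2⟩
  -- E1 at r_h
  have hE1rh : r_h * deriv A r_h + 2 * A r_h * (deriv w r_h) ^ 2
      = 1 - A r_h - (1 - (w r_h) ^ 2) ^ 2 / r_h ^ 2 - Λ * r_h ^ 2 := by
    set F : ℝ → ℝ := fun r => r * deriv A r + 2 * A r * (deriv w r) ^ 2
        - (1 - A r - (1 - (w r) ^ 2) ^ 2 / r ^ 2 - Λ * r ^ 2) with hF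
    have hcA : ContinuousAt A r_h := (hAd r_h le_rfl hρ).continuousAt
    have hcw : ContinuousAt w r_h := (hwd r_h le_rfl hρ).continuousAt
    have hcF : ContinuousAt F r_h := by
      apply ContinuousAt.sub
      · exact (continuousAt_id.mul hcA').add
          (((continuousAt_const.mul hcA)).mul (hcw'.pow 2))
      · refine ((continuousAt_const.sub hcA).sub ?_).sub
          (continuousAt_const.mul (continuousAt_id.pow 2))
        exact ContinuousAt.div (((continuousAt_const.sub (hcw.pow 2))).pow 2)
          (continuousAt_id.pow 2) (by positivity)
    have h1 : Filter.Tendsto F (nhdsWithin r_h (Set.Ioi r_h)) (nhds (F r_h)) :=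
      hcF.continuousWithinAt.tendsto
    have h2 : Filter.Tendsto F (nhdsWithin r_h (Set.Ioi r_h)) (nhds 0) := by
      refine Filter.Tendsto.congr' ?_ tendsto_const_nhds
      filter_upwards [Ioo_mem_nhdsGT_of_mem ⟨le_refl r_h, hρ⟩] with y hy
      simp [hF, hE1 y hy]
    have := tendsto_nhds_unique h1 h2
    simp only [hF] at this
    linarith
  have hE1' : ∀ x ∈ Set.Ico r_h ρ,
      x * deriv A x + 2 * A x * (deriv w x) ^ 2
        = 1 - A x - (1 - (w x) ^ 2) ^ 2 / x ^ 2 - Λ * x ^ 2 := by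
    rintro x ⟨h1, h2⟩
    rcases eq_or_lt_of_le h1 with rfl | h1
    · exact hE1rh
    · exact hE1 x ⟨h1, h2⟩
  have hA_le : ∀ x ∈ Set.Ico r_h ρ, A x ≤ 0 := by
    rintro x ⟨h1, h2⟩
    rcases eq_or_lt_of_le h1 with rfl | h1
    · exact le_of_eq hArh
    · exact (hAneg x ⟨h1, h2⟩).le
  -- w bounded
  set W : ℝ := |w r_h| + N * (ρ - r_h) with hWdef
  clear_value W
  have hW : ∀ x ∈ Set.Ico r_h ρ, |w x| ≤ W := by
    rintro x ⟨h1, h2⟩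
    have key := norm_image_sub_le_of_norm_deriv_le_segment'
      (f := w) (f' := deriv w) (a := r_h) (b := x) (C := N)
      (fun y hy => ((hwd y hy.1 (lt_of_le_of_lt hy.2 h2)).hasDerivAt).hasDerivWithinAt)
      (fun y hy => hNIco y ⟨hy.1, lt_of_lt_of_le hy.2 (le_of_lt h2)⟩)
      x ⟨h1, le_rfl⟩
    rw [Real.norm_eq_abs] at key
    have h3 : |w x| - |w r_h| ≤ |w x - w r_h| := abs_sub_abs_le_abs_sub _ _
    have h4 : N * (x - r_h) ≤ N * (ρ - r_h) := by nlinarith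
    simp only [hWdef]; linarith
  -- Gronwall setup
  set K : ℝ := (2 * N ^ 2 + 1) / r_h with hKdef
  clear_value K
  set Q : ℝ := 1 + (1 + W ^ 2) ^ 2 / r_h ^ 2 + Λ * ρ ^ 2 with hQdef
  clear_value Q
  have hW0 : 0 ≤ W := le_trans (abs_nonneg _) (hW r_h ⟨le_rfl, hρ⟩)
  have hK0 : 0 < K := hKdef ▸ div_pos (by positivity) hrh0
  have hQ1 : 1 ≤ Q := by
    have h1 : 0 ≤ (1 + W ^ 2) ^ 2 / r_h ^ 2 := by positivity
    have h2 : 0 ≤ Λ * ρ ^ 2 := mul_nonneg hΛ.le (sq_nonneg ρ)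
    rw [hQdef]; linarith
  set G : ℝ := Q / K * Real.exp (K * (ρ - r_h)) with hGdef
  clear_value G
  have hkey : ∀ r ∈ Set.Ioo r_h ρ, |r * A r| ≤ G := by
    rintro r ⟨hr1, hr2⟩
    set φ : ℝ → ℝ := fun x =>
      1 - (1 - (w x) ^ 2) ^ 2 / x ^ 2 - Λ * x ^ 2 - 2 * A x * (deriv w x) ^ 2 with hφdef
    clear_value φ
    have hcont : ContinuousOn (fun x => x * A x) (Set.Icc r_h r) :=
      fun x hx => (continuousAt_id.mul
        ((hAd x hx.1 (lt_of_le_of_lt hx.2 hr2)).continuousAt)).continuousWithinAt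
    have hder : ∀ x ∈ Set.Ico r_h r,
        HasDerivWithinAt (fun y => y * A y) (φ x) (Set.Ici x) x := by
      intro x hx
      have hxρ : x < ρ := lt_trans hx.2 hr2
      have hd : HasDerivAt (fun y => y * A y) (1 * A x + x * deriv A x) x :=
        (hasDerivAt_id x).mul ((hAd x hx.1 hxρ).hasDerivAt)
      have heq : 1 * A x + x * deriv A x = φ x := by
        have := hE1' x ⟨hx.1, hxρ⟩
        simp only [hφdef]; linarith
      exact (heq ▸ hd).hasDerivWithinAt
    have hbnd : ∀ x ∈ Set.Ico r_h r, ‖φ x‖ ≤ K * ‖x * A x‖ + Q := by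
      intro x hx
      have hxρ : x < ρ := lt_trans hx.2 hr2
      have hx0 : 0 < x := lt_of_lt_of_le hrh0 hx.1
      have ha : 0 ≤ -A x := by linarith [hA_le x ⟨hx.1, hxρ⟩]
      have hwx : |w x| ≤ W := hW x ⟨hx.1, hxρ⟩
      have hd0 : 0 ≤ (1 - (w x) ^ 2) ^ 2 / x ^ 2 := by positivity
      have hd1 : (1 - (w x) ^ 2) ^ 2 / x ^ 2 ≤ (1 + W ^ 2) ^ 2 / r_h ^ 2 := by
        apply div_le_div₀ (by positivity) _ (pow_pos hrh0 2)
          (by nlinarith [hx.1, hrh0])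
        have h1 : |1 - (w x) ^ 2| ≤ 1 + W ^ 2 := by
          rw [abs_le]
          have h2 := abs_le.mp hwx
          have h3 : (w x) ^ 2 ≤ W ^ 2 := sq_le_sq' (by linarith) (by linarith)
          constructor <;> nlinarith [sq_nonneg (w x)]
        exact sq_le_sq' (by linarith [(abs_le.mp h1).1]) (abs_le.mp h1).2
      have hΛ1 : 0 ≤ Λ * x ^ 2 := mul_nonneg hΛ.le (sq_nonneg x)
      have hΛ2 : Λ * x ^ 2 ≤ Λ * ρ ^ 2 :=
        mul_le_mul_of_nonneg_left (pow_le_pow_left₀ hx0.le hxρ.le 2) hΛ.le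
      have hp : (deriv w x) ^ 2 ≤ N ^ 2 := by
        have h := abs_le.mp (hNIco x ⟨hx.1, hxρ⟩)
        exact sq_le_sq' h.1 h.2
      have hp0 : 0 ≤ (deriv w x) ^ 2 := sq_nonneg _
      have hnorm : ‖x * A x‖ = x * (-A x) := by
        rw [Real.norm_eq_abs, abs_mul, abs_of_pos hx0, abs_of_nonpos (by linarith)]
      rw [hnorm, Real.norm_eq_abs]
      have h2ap : 2 * (-A x) * (deriv w x) ^ 2 ≤ (2 * N ^ 2 + 1) * (-A x) := by
        have h := mul_le_mul_of_nonneg_left hp ha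
        nlinarith [h]
      have hKg : (2 * N ^ 2 + 1) * (-A x) ≤ K * (x * (-A x)) := by
        rw [hKdef, div_mul_eq_mul_div, le_div_iff₀ hrh0]
        nlinarith [hx.1, mul_nonneg (mul_nonneg (by positivity : (0:ℝ) ≤ 2 * N ^ 2 + 1) (sub_nonneg.mpr hx.1)) ha]
      have hφx : φ x = 1 - (1 - (w x) ^ 2) ^ 2 / x ^ 2 - Λ * x ^ 2
          + 2 * (-A x) * (deriv w x) ^ 2 := by simp only [hφdef]; ring
      have hap0 : 0 ≤ 2 * -A x * deriv w x ^ 2 := mul_nonneg (by linarith) hp0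
      rw [abs_le]
      constructor
      · have hKg0 : 0 ≤ K * (x * (-A x)) := mul_nonneg hK0.le (mul_nonneg hx0.le ha)
        rw [hφx, hQdef]; linarith
      · rw [hφx, hQdef]; linarith
    have main := norm_le_gronwallBound_of_norm_deriv_right_le
      (f := fun x => x * A x) (f' := φ) (δ := 0) (K := K) (ε := Q) (a := r_h) (b := r)
      hcont hder (by simp [hArh]) hbnd r ⟨hr1.le, le_rfl⟩
    rw [Real.norm_eq_abs] at main
    refine le_trans main ?_
    rw [gronwallBound_of_K_ne_0 (ne_of_gt hK0)]
    simp only [zero_mul, zero_add, hGdef]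
    have h1 : Real.exp (K * (r - r_h)) - 1 ≤ Real.exp (K * (ρ - r_h)) := by
      have : Real.exp (K * (r - r_h)) ≤ Real.exp (K * (ρ - r_h)) := by
        apply Real.exp_le_exp.mpr; nlinarith
      linarith
    have hQK : 0 ≤ Q / K := div_nonneg (by linarith) hK0.le
    exact mul_le_mul_of_nonneg_left h1 hQK
  -- bound on A
  have hG0 : 0 ≤ G := hGdef ▸ mul_nonneg (div_nonneg (by linarith) hK0.le) (Real.exp_pos _).le
  set B : ℝ := G / r_h with hBdef
  clear_value B
  have hB0 : 0 ≤ B := hBdef ▸ div_nonneg hG0 hrh0.le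
  have hAbd : ∀ r ∈ Set.Ioo r_h ρ, |A r| ≤ B := by
    rintro r ⟨hr1, hr2⟩
    have h1 := hkey r ⟨hr1, hr2⟩
    have hr0 : 0 < r := lt_trans hrh0 hr1
    rw [abs_mul, abs_of_pos hr0] at h1
    rw [hBdef, le_div_iff₀ hrh0]
    calc |A r| * r_h ≤ |A r| * r := mul_le_mul_of_nonneg_left hr1.le (abs_nonneg _)
      _ = r * |A r| := mul_comm _ _
      _ ≤ G := h1
  -- final bound
  refine ⟨(1 + B + (1 + W ^ 2) ^ 2 / r_h ^ 2 + Λ * ρ ^ 2 + 2 * B * N ^ 2) / r_h, ?_, ?_⟩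
  · apply div_pos _ hrh0
    have h1 : 0 ≤ (1 + W ^ 2) ^ 2 / r_h ^ 2 := by positivity
    have h2 : 0 ≤ Λ * ρ ^ 2 := mul_nonneg hΛ.le (sq_nonneg ρ)
    have h3 : 0 ≤ 2 * B * N ^ 2 := by positivity
    linarith
  · rintro r ⟨hr1, hr2⟩
    have hr0 : 0 < r := lt_trans hrh0 hr1
    have hE := hE1 r ⟨hr1, hr2⟩
    have hab : |A r| ≤ B := hAbd r ⟨hr1, hr2⟩
    have hAlb : -B ≤ A r := by linarith [(abs_le.mp hab).1]
    have hAub : A r ≤ 0 := (hAneg r ⟨hr1, hr2⟩).le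
    have hwx : |w r| ≤ W := hW r ⟨hr1.le, hr2⟩
    have hd0 : 0 ≤ (1 - (w r) ^ 2) ^ 2 / r ^ 2 := by positivity
    have hd1 : (1 - (w r) ^ 2) ^ 2 / r ^ 2 ≤ (1 + W ^ 2) ^ 2 / r_h ^ 2 := by
      apply div_le_div₀ (by positivity) _ (pow_pos hrh0 2) (by nlinarith [hr1, hrh0])
      have h1 : |1 - (w r) ^ 2| ≤ 1 + W ^ 2 := by
        rw [abs_le]
        have h2 := abs_le.mp hwx
        have h3 : (w r) ^ 2 ≤ W ^ 2 := sq_le_sq' (by linarith) (by linarith)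
        constructor <;> nlinarith [sq_nonneg (w r)]
      exact sq_le_sq' (by linarith [(abs_le.mp h1).1]) (abs_le.mp h1).2
    have hL1 : 0 ≤ Λ * r ^ 2 := mul_nonneg hΛ.le (sq_nonneg r)
    have hL2 : Λ * r ^ 2 ≤ Λ * ρ ^ 2 :=
      mul_le_mul_of_nonneg_left (pow_le_pow_left₀ hr0.le hr2.le 2) hΛ.le
    have hp : (deriv w r) ^ 2 ≤ N ^ 2 := by
      have h := abs_le.mp (hN r ⟨hr1, hr2⟩)
      exact sq_le_sq' h.1 h.2
    have hp0 : 0 ≤ (deriv w r) ^ 2 := sq_nonneg _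
    have hNA : -A r ≤ B := by
      have := le_abs_self (-A r); rw [abs_neg] at this; linarith
    have h2ub : -(2 * A r * (deriv w r) ^ 2) ≤ 2 * B * N ^ 2 := by
      have h := mul_le_mul hNA hp hp0 hB0
      nlinarith [h]
    have h2lb : 0 ≤ -(2 * A r * (deriv w r) ^ 2) := by
      have h := mul_nonneg (by linarith : (0:ℝ) ≤ -A r) hp0
      nlinarith [h]
    have hrd : r * deriv A r
        = 1 - A r - (1 - (w r) ^ 2) ^ 2 / r ^ 2 - Λ * r ^ 2 - 2 * A r * (deriv w r) ^ 2 := by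
      linarith
    have habs : |r * deriv A r|
        ≤ 1 + B + (1 + W ^ 2) ^ 2 / r_h ^ 2 + Λ * ρ ^ 2 + 2 * B * N ^ 2 := by
      rw [hrd, abs_le]
      constructor
      · linarith
      · linarith
    rw [abs_mul, abs_of_pos hr0] at habs
    rw [le_div_iff₀ hrh0]
    calc |deriv A r| * r_h ≤ |deriv A r| * r :=
          mul_le_mul_of_nonneg_left hr1.le (abs_nonneg _)
      _ = r * |deriv A r| := mul_comm _ _
      _ ≤ _ := habs
end
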